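/- arXiv:1505.05302 — 4 statements merged into one kernel-verified Lean document; each statement's English description precedes it below -/
import Mathlib

section
/- Let X be a Banach space, let r > 0, and let (x_j)_{j∈ℕ} be a sequence in the closed unit ball of X that spans the spaces ℓ₁ⁿ r-uniformly. Then there exist pairwise disjoint finite subsets A_i ⊆ ℕ (i ∈ ℕ) and scalars (α_j) such that the block sequence y_i = ∑_{j∈A_i} α_j x_j satisfies: (i) ‖y_i‖ = 1 for all i; (ii) ∑_{j∈A_i} |α_j| < (1 + 2^{-i})/r for all i; and (iii) for each n ∈ ℕ, the finite sequence (y_i)_{i∈B_n}, where B_n = {1 + (n-1)n/2, …, n(n+1)/2}, spans a (1 - 2^{-n})-copy of ℓ₁ⁿ. -/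
/-!
James's blocking argument. Call `t` admissible if for all `n` and `M` the sequence `x` has `n`
disjointly supported blocks beyond `M`, with coefficient ℓ¹-norms and norms at most `1`,
satisfying the lower ℓ₁-estimate with constant `t`. The hypothesis makes `r` admissible,
admissible constants are at most `1`, and `c` is their supremum.

For `t < c < s` the blocks can moreover be taken of norm at most `s`. Otherwise, for some `n`,
any `t`-family of `n * m` blocks, split into `n` windows of `m` blocks, has a window in which every
normalized combination has norm at least `s` (else these combinations would be such `n` blocks);
that window is an `s`-family of `m` blocks, so `s` would be admissible.

Normalizing blocks whose norms lie in `[c (1 - ε), c (1 + ε)]` gives unit vectors with coefficient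
sums at most `1 / (c (1 - ε)) ≤ 1 / (r (1 - ε))` spanning `(1 - ε) / (1 + ε)`-copies of `ℓ₁ⁿ`. The
`n`-th group is taken with `ε` of order `2 ^ (-n (n + 1) / 2)` and beyond the supports of the
earlier groups.
-/

open Finset Function

noncomputable section

variable {𝕜 X : Type*} [RCLike 𝕜] [NormedAddCommGroup X] [NormedSpace 𝕜 X]

def l1Norm {α : Type*} (f : α →₀ 𝕜) : ℝ := f.sum fun _ a => ‖a‖

section L1Norm

variable {α : Type*}

lemma l1Norm_single (a : α) (c : 𝕜) : l1Norm (Finsupp.single a c) = ‖c‖ :=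
  Finsupp.sum_single_index norm_zero

lemma l1Norm_smul (c : 𝕜) (f : α →₀ 𝕜) : l1Norm (c • f) = ‖c‖ * l1Norm f := by
  rw [l1Norm, Finsupp.sum_smul_index' fun _ => norm_zero, l1Norm, Finsupp.mul_sum]
  simp only [norm_smul]

lemma l1Norm_add_le (f g : α →₀ 𝕜) : l1Norm (f + g) ≤ l1Norm f + l1Norm g := by
  classical
  simp only [l1Norm]
  rw [Finsupp.sum_of_support_subset _ Finsupp.support_add _ fun _ _ => norm_zero,
    Finsupp.sum_of_support_subset f subset_union_left _ fun _ _ => norm_zero,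
    Finsupp.sum_of_support_subset g subset_union_right _ fun _ _ => norm_zero, ← sum_add_distrib]
  exact sum_le_sum fun _ _ => norm_add_le _ _

lemma l1Norm_sum_le {ι : Type*} (s : Finset ι) (f : ι → α →₀ 𝕜) :
    l1Norm (∑ i ∈ s, f i) ≤ ∑ i ∈ s, l1Norm (f i) :=
  le_sum_of_subadditive (l1Norm (𝕜 := 𝕜) (α := α)) Finsupp.sum_zero_index.le l1Norm_add_le s f

end L1Norm

variable (𝕜) in
def HasL1LowerEstimate {ι : Type*} [Fintype ι] (t : ℝ) (v : ι → X) : Prop :=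
  ∀ β : ι → 𝕜, t * ∑ i, ‖β i‖ ≤ ‖∑ i, β i • v i‖

namespace HasL1LowerEstimate

variable {ι κ : Type*} [Fintype ι] [Fintype κ] {t : ℝ} {v : ι → X}

lemma mono (h : HasL1LowerEstimate 𝕜 t v) {t' : ℝ} (ht : t' ≤ t) : HasL1LowerEstimate 𝕜 t' v :=
  fun β => (mul_le_mul_of_nonneg_right ht (sum_nonneg fun _ _ => norm_nonneg _)).trans (h β)

lemma comp_embedding (h : HasL1LowerEstimate 𝕜 t v) (e : κ ↪ ι) :
    HasL1LowerEstimate 𝕜 t (v ∘ e) := by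
  intro β
  have hβ : ∀ k, extend e β (0 : ι → 𝕜) (e k) = β k := e.injective.extend_apply β _
  have hzero : ∀ i ∉ Set.range e, extend e β (0 : ι → 𝕜) i = 0 := fun i hi =>
    extend_apply' β _ i hi
  convert h (extend e β (0 : ι → 𝕜)) using 3
  · exact Fintype.sum_of_injective e e.injective _ _ (fun i hi => by simp [hzero i hi])
      fun k => by rw [hβ]
  · exact Fintype.sum_of_injective e e.injective _ _ (fun i hi => by simp [hzero i hi])
      fun k => by rw [hβ, comp_apply]

lemma le_norm (h : HasL1LowerEstimate 𝕜 t v) (i : ι) : t ≤ ‖v i‖ := by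
  classical
  have hsum : ∑ j, ‖Pi.single (M := fun _ => 𝕜) i 1 j‖ = 1 := by
    rw [Fintype.sum_eq_single i fun j hj => by simp [hj]]
    simp
  simpa [hsum] using h (Pi.single i 1)

lemma smul (h : HasL1LowerEstimate 𝕜 t v) (ht : 0 ≤ t) {a : ℝ} {c : ι → 𝕜}
    (hc : ∀ i, a ≤ ‖c i‖) : HasL1LowerEstimate 𝕜 (t * a) fun i => c i • v i := by
  intro β
  calc t * a * ∑ i, ‖β i‖ = t * ∑ i, ‖β i‖ * a := by rw [← sum_mul]; ring
    _ ≤ t * ∑ i, ‖β i * c i‖ := by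
      gcongr with i
      rw [norm_mul]
      exact mul_le_mul_of_nonneg_left (hc i) (norm_nonneg _)
    _ ≤ ‖∑ i, (β i * c i) • v i‖ := h _
    _ = ‖∑ i, β i • c i • v i‖ := by simp only [mul_smul]

lemma sum_smul_prod {v : ι × κ → X} (h : HasL1LowerEstimate 𝕜 t v) {γ : ι → κ → 𝕜}
    (hγ : ∀ k, ∑ l, ‖γ k l‖ = 1) :
    HasL1LowerEstimate 𝕜 t fun k => ∑ l, γ k l • v (k, l) := by
  intro β
  have hnorm : ∑ p : ι × κ, ‖β p.1 * γ p.1 p.2‖ = ∑ k, ‖β k‖ := by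
    simp only [Fintype.sum_prod_type, norm_mul, ← mul_sum, hγ, mul_one]
  have hsum : ∑ p : ι × κ, (β p.1 * γ p.1 p.2) • v p = ∑ k, β k • ∑ l, γ k l • v (k, l) := by
    simp only [Fintype.sum_prod_type, mul_smul, smul_sum]
  simpa only [hnorm, hsum] using h fun p => β p.1 * γ p.1 p.2

lemma exists_sum_norm_eq_one_of_not {s : ℝ} (h : ¬ HasL1LowerEstimate 𝕜 s v) :
    ∃ γ : ι → 𝕜, ∑ i, ‖γ i‖ = 1 ∧ ‖∑ i, γ i • v i‖ < s := by
  obtain ⟨β, hβ⟩ := not_forall.1 h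
  rw [not_le] at hβ
  have hσ : 0 < ∑ i, ‖β i‖ := (sum_nonneg fun i _ => norm_nonneg (β i)).lt_of_ne fun h0 => by
    rw [← h0, mul_zero] at hβ
    exact (norm_nonneg _).not_gt hβ
  refine ⟨fun i => ((∑ i, ‖β i‖ : ℝ) : 𝕜)⁻¹ * β i, ?_, ?_⟩
  · simp only [norm_mul, norm_inv, RCLike.norm_ofReal, abs_of_pos hσ, ← mul_sum]
    exact inv_mul_cancel₀ hσ.ne'
  · simp only [mul_smul, ← smul_sum, norm_smul, norm_inv, RCLike.norm_ofReal, abs_of_pos hσ]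
    rwa [inv_mul_lt_iff₀ hσ, mul_comm]

end HasL1LowerEstimate

def IsBlockFamily {R ι : Type*} [Zero R] (u : ι → ℕ →₀ R) (M : ℕ) : Prop :=
  Pairwise (Disjoint on fun i => (u i).support) ∧ ∀ i, ∀ j ∈ (u i).support, M ≤ j

namespace IsBlockFamily

variable {ι κ : Type*} {M : ℕ}

lemma mono {R : Type*} [Zero R] {u : ι → ℕ →₀ R} (hu : IsBlockFamily u M) {M' : ℕ}
    (hM : M' ≤ M) : IsBlockFamily u M' :=
  ⟨hu.1, fun i j hj => hM.trans (hu.2 i j hj)⟩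

lemma comp {R : Type*} [Zero R] {u : ι → ℕ →₀ R} (hu : IsBlockFamily u M) {f : κ → ι}
    (hf : Injective f) : IsBlockFamily (u ∘ f) M :=
  ⟨hu.1.comp_of_injective hf, fun k => hu.2 (f k)⟩

variable {R : Type*} [Semiring R]

lemma smul {u : ι → ℕ →₀ R} (hu : IsBlockFamily u M) (c : ι → R) :
    IsBlockFamily (fun i => c i • u i) M :=
  ⟨fun _ _ h => (hu.1 h).mono Finsupp.support_smul Finsupp.support_smul,
    fun i _ hj => hu.2 i _ (Finsupp.support_smul hj)⟩

lemma sum_smul_prod [Fintype κ] {u : ι × κ → ℕ →₀ R} (hu : IsBlockFamily u M)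
    (γ : ι → κ → R) : IsBlockFamily (fun k => ∑ l, γ k l • u (k, l)) M := by
  have hsupp : ∀ k, ∀ j ∈ (∑ l, γ k l • u (k, l)).support, ∃ l, j ∈ (u (k, l)).support :=
    fun k j hj => by
      obtain ⟨l, -, hl⟩ := Finsupp.mem_support_finsetSum j hj
      exact ⟨l, Finsupp.support_smul hl⟩
  refine ⟨fun k k' hkk' => disjoint_left.2 fun j hj hj' => ?_, fun k j hj => ?_⟩
  · obtain ⟨l, hl⟩ := hsupp k j hj
    obtain ⟨l', hl'⟩ := hsupp k' j hj'
    exact disjoint_left.1 (hu.1 fun h => hkk' (Prod.ext_iff.1 h).1) hl hl'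
  · obtain ⟨l, hl⟩ := hsupp k j hj
    exact hu.2 _ j hl

end IsBlockFamily

variable (𝕜) in
def HasL1Blocks (x : ℕ → X) (t s : ℝ) (ι : Type*) [Fintype ι] (M : ℕ) : Prop :=
  ∃ u : ι → ℕ →₀ 𝕜, IsBlockFamily u M ∧ (∀ i, l1Norm (u i) ≤ 1) ∧
    (∀ i, ‖Finsupp.linearCombination 𝕜 x (u i)‖ ≤ s) ∧
    HasL1LowerEstimate 𝕜 t fun i => Finsupp.linearCombination 𝕜 x (u i)

namespace HasL1Blocks

variable {x : ℕ → X} {t s : ℝ} {ι κ : Type*} [Fintype ι] [Fintype κ] {M : ℕ}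

lemma mono (h : HasL1Blocks 𝕜 x t s ι M) {t' s' : ℝ} {M' : ℕ} (ht : t' ≤ t) (hs : s ≤ s')
    (hM : M' ≤ M) : HasL1Blocks 𝕜 x t' s' ι M' :=
  let ⟨u, hu, hl1, hnorm, hest⟩ := h
  ⟨u, hu.mono hM, hl1, fun i => (hnorm i).trans hs, hest.mono ht⟩

lemma comp_embedding (h : HasL1Blocks 𝕜 x t s ι M) (e : κ ↪ ι) : HasL1Blocks 𝕜 x t s κ M :=
  let ⟨u, hu, hl1, hnorm, hest⟩ := h
  ⟨u ∘ e, hu.comp e.injective, fun k => hl1 (e k), fun k => hnorm (e k), hest.comp_embedding e⟩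

lemma le_of_nonempty [Nonempty ι] (h : HasL1Blocks 𝕜 x t s ι M) : t ≤ s :=
  let ⟨_, _, _, hnorm, hest⟩ := h
  (hest.le_norm (Classical.arbitrary ι)).trans (hnorm _)

lemma or_of_prod {σ : ℝ} (h : HasL1Blocks 𝕜 x t σ (ι × κ) M) :
    HasL1Blocks 𝕜 x s σ κ M ∨ HasL1Blocks 𝕜 x t s ι M := by
  obtain ⟨u, hu, hl1, hnorm, hest⟩ := h
  by_cases hwin : ∃ k, HasL1LowerEstimate 𝕜 s fun l => Finsupp.linearCombination 𝕜 x (u (k, l))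
  · obtain ⟨k, hk⟩ := hwin
    exact .inl ⟨fun l => u (k, l), hu.comp (Prod.mk_right_injective k), fun l => hl1 _,
      fun l => hnorm _, hk⟩
  choose γ hγ1 hγs using fun k =>
    HasL1LowerEstimate.exists_sum_norm_eq_one_of_not (not_exists.1 hwin k)
  refine .inr ⟨fun k => ∑ l, γ k l • u (k, l), hu.sum_smul_prod γ, fun k => ?_, fun k => ?_, ?_⟩
  · calc l1Norm (∑ l, γ k l • u (k, l)) ≤ ∑ l, ‖γ k l‖ * l1Norm (u (k, l)) := by
          simpa only [l1Norm_smul] using l1Norm_sum_le univ fun l => γ k l • u (k, l)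
      _ ≤ ∑ l, ‖γ k l‖ := sum_le_sum fun l _ => mul_le_of_le_one_right (norm_nonneg _) (hl1 _)
      _ = 1 := hγ1 k
  · simpa only [map_sum, map_smul] using (hγs k).le
  · simpa only [map_sum, map_smul] using hest.sum_smul_prod hγ1

lemma exists_normalized (h : HasL1Blocks 𝕜 x t s ι M) (ht : 0 < t) :
    ∃ u : ι → ℕ →₀ 𝕜, IsBlockFamily u M ∧ (∀ i, ‖Finsupp.linearCombination 𝕜 x (u i)‖ = 1) ∧
      (∀ i, l1Norm (u i) ≤ t⁻¹) ∧
      HasL1LowerEstimate 𝕜 (t / s) fun i => Finsupp.linearCombination 𝕜 x (u i) := by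
  obtain ⟨u, hu, hl1, hnorm, hest⟩ := h
  set v := fun i => Finsupp.linearCombination 𝕜 x (u i)
  have hv : ∀ i, 0 < ‖v i‖ := fun i => ht.trans_le (hest.le_norm i)
  refine ⟨fun i => (‖v i‖⁻¹ : 𝕜) • u i, hu.smul _, fun i => ?_, fun i => ?_, ?_⟩
  · rw [map_smul]
    exact norm_smul_inv_norm (norm_pos_iff.1 (hv i))
  · rw [l1Norm_smul, ← RCLike.ofReal_inv, RCLike.norm_ofReal, abs_inv, abs_norm]
    exact (mul_le_of_le_one_right (by positivity) (hl1 i)).trans (inv_anti₀ ht (hest.le_norm i))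
  · simp only [map_smul]
    refine (hest.smul ht.le fun i => ?_).mono (div_eq_mul_inv t s).le
    rw [← RCLike.ofReal_inv, RCLike.norm_ofReal, abs_inv, abs_norm]
    exact inv_anti₀ (hv i) (hnorm i)

end HasL1Blocks

lemma Fin.val_le_of_strictMono {m : ℕ} {j : Fin m → ℕ} (hj : StrictMono j) (k : Fin m) :
    (k : ℕ) ≤ j k := by
  obtain ⟨k, hk⟩ := k
  induction k with
  | zero => exact Nat.zero_le _
  | succ k ih => exact (ih (by omega)).trans_lt (hj (Fin.mk_lt_mk.2 k.lt_succ_self))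

variable {x : ℕ → X} {r : ℝ}

lemma hasL1Blocks_of_uniform (hx : ∀ j, ‖x j‖ ≤ 1)
    (hunif : ∀ n, ∃ j : Fin n → ℕ, StrictMono j ∧ HasL1LowerEstimate 𝕜 r (x ∘ j))
    (n M : ℕ) : HasL1Blocks 𝕜 x r 1 (Fin n) M := by
  obtain ⟨j, hj, hlow⟩ := hunif (M + n)
  refine ⟨fun k => Finsupp.single (j (Fin.natAdd M k)) 1, ⟨fun k k' hkk' => ?_, fun k i hi => ?_⟩,
    fun k => by rw [l1Norm_single, norm_one], fun k => by simpa using hx _, ?_⟩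
  · simpa using hj.injective.ne ((Fin.natAddEmb M).injective.ne hkk')
  · rw [Finsupp.support_single _ one_ne_zero, mem_singleton] at hi
    have := Fin.val_le_of_strictMono hj (Fin.natAdd M k)
    rw [Fin.val_natAdd] at this
    omega
  · convert hlow.comp_embedding (Fin.natAddEmb M) using 2 with k
    simp

lemma exists_critical_constant (hx : ∀ j, ‖x j‖ ≤ 1)
    (hunif : ∀ n, ∃ j : Fin n → ℕ, StrictMono j ∧ HasL1LowerEstimate 𝕜 r (x ∘ j)) :
    ∃ c, r ≤ c ∧ (∀ t < c, ∀ n M, HasL1Blocks 𝕜 x t 1 (Fin n) M) ∧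
      ∀ s, (∀ n M, HasL1Blocks 𝕜 x s 1 (Fin n) M) → s ≤ c := by
  set S := {t | ∀ n M, HasL1Blocks 𝕜 x t 1 (Fin n) M}
  have hrS : r ∈ S := hasL1Blocks_of_uniform hx hunif
  have hS : BddAbove S := ⟨1, fun t ht => (ht 1 0).le_of_nonempty⟩
  refine ⟨sSup S, le_csSup hS hrS, fun t ht n M => ?_, fun s hs => le_csSup hS hs⟩
  obtain ⟨t', ht', htt'⟩ := exists_lt_of_lt_csSup ⟨r, hrS⟩ ht
  exact (ht' n M).mono htt'.le le_rfl le_rfl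

lemma hasL1Blocks_of_lt_of_lt {c : ℝ}
    (hlow : ∀ t < c, ∀ n M, HasL1Blocks 𝕜 x t 1 (Fin n) M)
    (hhigh : ∀ s, (∀ n M, HasL1Blocks 𝕜 x s 1 (Fin n) M) → s ≤ c) {t s : ℝ} (ht : t < c)
    (hs : c < s) (ι : Type*) [Fintype ι] (M : ℕ) : HasL1Blocks 𝕜 x t s ι M := by
  by_contra hbad
  refine (hhigh s fun m M' => ?_).not_gt hs
  have e : ι × Fin m ↪ Fin (Fintype.card ι * m) :=
    ((Fintype.equivFin ι).prodCongr (Equiv.refl _)).trans finProdFinEquiv |>.toEmbedding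
  rcases ((hlow t ht _ (max M M')).comp_embedding e).or_of_prod (s := s) with h | h
  · exact h.mono le_rfl le_rfl (le_max_right _ _)
  · exact absurd (h.mono le_rfl le_rfl (le_max_left _ _)) hbad

lemma exists_almost_isometric_blocks {c : ℝ}
    (hlow : ∀ t < c, ∀ n M, HasL1Blocks 𝕜 x t 1 (Fin n) M)
    (hhigh : ∀ s, (∀ n M, HasL1Blocks 𝕜 x s 1 (Fin n) M) → s ≤ c) (hc : 0 < c) {ε : ℝ}
    (hε : 0 < ε) (hε1 : ε < 1) (ι : Type*) [Fintype ι] (M : ℕ) :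
    ∃ u : ι → ℕ →₀ 𝕜, IsBlockFamily u M ∧ (∀ i, ‖Finsupp.linearCombination 𝕜 x (u i)‖ = 1) ∧
      (∀ i, l1Norm (u i) ≤ (c * (1 - ε))⁻¹) ∧
      HasL1LowerEstimate 𝕜 (1 - 2 * ε) fun i => Finsupp.linearCombination 𝕜 x (u i) := by
  obtain ⟨u, hu, hnorm, hl1, hest⟩ := (hasL1Blocks_of_lt_of_lt hlow hhigh
    (t := c * (1 - ε)) (s := c * (1 + ε)) (by nlinarith) (by nlinarith) ι M).exists_normalized
    (by nlinarith)
  refine ⟨u, hu, hnorm, hl1, hest.mono ?_⟩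
  rw [mul_div_mul_left _ _ hc.ne', le_div_iff₀ (by linarith)]
  nlinarith

lemma exists_pairwise_disjoint_of_forall_exists_le {α : ℕ → Type*} (P : ∀ n, α n → Prop)
    (supp : ∀ n, α n → Finset ℕ) (h : ∀ n M, ∃ a, P n a ∧ ∀ j ∈ supp n a, M ≤ j) :
    ∃ a : ∀ n, α n, (∀ n, P n (a n)) ∧ Pairwise (Disjoint on fun n => supp n (a n)) := by
  choose b hbP hbM using h
  -- `bound n` lies above the supports of all the earlier choices
  let bound : ℕ → ℕ := fun n => Nat.rec 0 (fun n M => max M ((supp n (b n M)).sup id + 1)) n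
  have hlt : ∀ n, ∀ j ∈ supp n (b n (bound n)), j < bound (n + 1) := fun n j hj =>
    (Nat.lt_succ_of_le (le_sup (f := id) hj)).trans_le (le_max_right _ _)
  have hmono : Monotone bound := monotone_nat_of_le_succ fun n => le_max_left _ _
  refine ⟨fun n => b n (bound n), fun n => hbP _ _, Pairwise.of_lt fun n n' hn => ?_⟩
  exact disjoint_left.2 fun j hj hj' => (hlt n j hj).not_ge ((hmono hn).trans (hbM _ _ j hj'))

lemma exists_pairwise_disjoint_of_forall_exists_isBlockFamily {R : Type*} [Zero R]
    {B : ℕ → Finset ℕ} (hB : Pairwise (Disjoint on B)) (P : ∀ n, (B n → ℕ →₀ R) → Prop)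
    (h : ∀ n M, ∃ G : B n → ℕ →₀ R, IsBlockFamily G M ∧ P n G) :
    ∃ y : ℕ → ℕ →₀ R, Pairwise (Disjoint on fun i => (y i).support) ∧ ∀ n, P n fun i => y i := by
  classical
  obtain ⟨G, hG, hdisj⟩ := exists_pairwise_disjoint_of_forall_exists_le
    (fun n G => IsBlockFamily G 0 ∧ P n G) (fun n G => univ.biUnion fun i => (G i).support)
    fun n M => by
      obtain ⟨G, hG, hP⟩ := h n M
      exact ⟨G, ⟨hG.mono (Nat.zero_le M), hP⟩, fun j hj => by
        obtain ⟨i, -, hi⟩ := mem_biUnion.1 hj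
        exact hG.2 i j hi⟩
  have huniq : ∀ {i n n'}, i ∈ B n → i ∈ B n' → n = n' := fun hi hi' =>
    by_contra fun hne => disjoint_left.1 (hB hne) hi hi'
  let y : ℕ → ℕ →₀ R := fun i =>
    if h : ∃ n, i ∈ B n then G (Nat.find h) ⟨i, Nat.find_spec h⟩ else 0
  have hy : ∀ n (i : B n), y i = G n i := by
    rintro n ⟨i, hi⟩
    have h : ∃ n, i ∈ B n := ⟨n, hi⟩
    obtain rfl : Nat.find h = n := huniq (Nat.find_spec h) hi
    exact dif_pos h
  refine ⟨y, fun i i' hii' => ?_, fun n => by simpa only [hy] using (hG n).2⟩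
  change Disjoint (y i).support (y i').support
  by_cases hi : ∃ n, i ∈ B n
  swap
  · rw [show y i = 0 from dif_neg hi, Finsupp.support_zero]
    exact disjoint_empty_left _
  by_cases hi' : ∃ n, i' ∈ B n
  swap
  · rw [show y i' = 0 from dif_neg hi', Finsupp.support_zero]
    exact disjoint_empty_right _
  obtain ⟨n, hn⟩ := hi
  obtain ⟨n', hn'⟩ := hi'
  rw [show y i = G n ⟨i, hn⟩ from hy n ⟨i, hn⟩, show y i' = G n' ⟨i', hn'⟩ from hy n' ⟨i', hn'⟩]
  rcases eq_or_ne n n' with rfl | hne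
  · exact (hG n).1.1 fun h => hii' (congrArg Subtype.val h)
  · exact (hdisj hne).mono (subset_biUnion_of_mem (fun i => (G n i).support) (mem_univ _))
      (subset_biUnion_of_mem (fun i => (G n' i).support) (mem_univ _))

lemma exists_forall_mem_support_eq {ι κ R : Type*} [Zero R] {y : ι → κ →₀ R}
    (h : Pairwise (Disjoint on fun i => (y i).support)) :
    ∃ α : κ → R, ∀ i, ∀ j ∈ (y i).support, α j = y i j := by
  classical
  refine ⟨fun j => if h : ∃ i, j ∈ (y i).support then y h.choose j else 0, fun i j hj => ?_⟩
  have h' : ∃ i, j ∈ (y i).support := ⟨i, hj⟩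
  have : h'.choose = i := by_contra fun hne => disjoint_left.1 (h hne) h'.choose_spec hj
  simp only [dif_pos h', this]

def triangleBlock (n : ℕ) : Finset ℕ := Icc ((n - 1) * n / 2 + 1) (n * (n + 1) / 2)

lemma pairwise_disjoint_triangleBlock : Pairwise (Disjoint on triangleBlock) :=
  Pairwise.of_lt fun n n' h => disjoint_left.2 fun i hi hi' => by
    simp only [triangleBlock, mem_Icc] at hi hi'
    have : n * (n + 1) / 2 ≤ (n' - 1) * n' / 2 :=
      Nat.div_le_div_right (Nat.mul_le_mul (Nat.le_sub_one_of_lt h) h)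
    omega

lemma le_mul_succ_div_two (n : ℕ) : n ≤ n * (n + 1) / 2 := by
  rw [Nat.le_div_iff_mul_le two_pos]
  rcases n with _ | n
  · simp
  · exact Nat.mul_le_mul_left _ (by omega)

lemma exists_mem_triangleBlock {i : ℕ} (hi : 1 ≤ i) : ∃ n, i ∈ triangleBlock n := by
  have h : ∃ n, i ≤ n * (n + 1) / 2 := ⟨i, le_mul_succ_div_two i⟩
  refine ⟨Nat.find h, mem_Icc.2 ⟨?_, Nat.find_spec h⟩⟩
  have hpos : Nat.find h ≠ 0 := fun h0 => by
    have := Nat.find_spec h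
    rw [h0] at this
    omega
  have hprev := Nat.find_min h (Nat.sub_one_lt hpos)
  rw [Nat.sub_add_cancel (Nat.one_le_iff_ne_zero.2 hpos)] at hprev
  omega

lemma inv_mul_one_sub_lt {r c δ d : ℝ} (hr : 0 < r) (hrc : r ≤ c) (hδ : 0 < δ) (hδd : δ ≤ d)
    (hd : d ≤ 1) : (c * (1 - δ / 4))⁻¹ < (1 + d) / r := by
  rw [inv_eq_one_div, div_lt_div_iff₀ (by nlinarith) hr]
  have hgain : 1 < (1 + d) * (1 - δ / 4) := by nlinarith
  nlinarith [mul_le_mul_of_nonneg_left hrc (by linarith : (0 : ℝ) ≤ (1 + d) * (1 - δ / 4))]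

lemma exists_almost_isometric_block_sequence (hr : 0 < r) (hx : ∀ j, ‖x j‖ ≤ 1)
    (hunif : ∀ n, ∃ j : Fin n → ℕ, StrictMono j ∧ HasL1LowerEstimate 𝕜 r (x ∘ j)) :
    ∃ y : ℕ → ℕ →₀ 𝕜, Pairwise (Disjoint on fun i => (y i).support) ∧
      (∀ i, 1 ≤ i → ‖Finsupp.linearCombination 𝕜 x (y i)‖ = 1) ∧
      (∀ i, 1 ≤ i → l1Norm (y i) < (1 + (1 / 2 : ℝ) ^ i) / r) ∧
      ∀ n, HasL1LowerEstimate 𝕜 (1 - (1 / 2 : ℝ) ^ n)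
        fun i : triangleBlock n => Finsupp.linearCombination 𝕜 x (y i) := by
  obtain ⟨c, hrc, hlow, hhigh⟩ := exists_critical_constant hx hunif
  -- the `n`-th group is built with precision `δ n / 4`, where `δ n ≤ 2⁻ⁱ` for all its indices `i`
  set δ : ℕ → ℝ := fun n => (1 / 2 : ℝ) ^ (n * (n + 1) / 2)
  have hδ : ∀ n, 0 < δ n ∧ δ n ≤ 1 := fun n =>
    ⟨by positivity, pow_le_one₀ (by norm_num) (by norm_num)⟩
  obtain ⟨y, hdisj, hy⟩ := exists_pairwise_disjoint_of_forall_exists_isBlockFamily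
    pairwise_disjoint_triangleBlock
    (fun n G => (∀ i, ‖Finsupp.linearCombination 𝕜 x (G i)‖ = 1) ∧
      (∀ i, l1Norm (G i) ≤ (c * (1 - δ n / 4))⁻¹) ∧
      HasL1LowerEstimate 𝕜 (1 - 2 * (δ n / 4)) fun i => Finsupp.linearCombination 𝕜 x (G i))
    fun n M => by
      obtain ⟨u, hu, h⟩ := exists_almost_isometric_blocks hlow hhigh (hr.trans_le hrc)
        (ε := δ n / 4) (by linarith [hδ n]) (by linarith [hδ n]) (triangleBlock n) M
      exact ⟨u, hu, h⟩
  have hδle : ∀ n, ∀ i ∈ triangleBlock n, δ n ≤ (1 / 2 : ℝ) ^ i := fun n i hi =>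
    pow_le_pow_of_le_one (by norm_num) (by norm_num) (mem_Icc.1 hi).2
  refine ⟨y, hdisj, fun i hi => ?_, fun i hi => ?_, fun n => (hy n).2.2.mono ?_⟩
  · obtain ⟨n, hn⟩ := exists_mem_triangleBlock hi
    exact (hy n).1 ⟨i, hn⟩
  · obtain ⟨n, hn⟩ := exists_mem_triangleBlock hi
    exact ((hy n).2.1 ⟨i, hn⟩).trans_lt (inv_mul_one_sub_lt hr hrc (hδ n).1 (hδle n i hn)
      (pow_le_one₀ (by norm_num) (by norm_num)))
  · have : δ n ≤ (1 / 2 : ℝ) ^ n :=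
      pow_le_pow_of_le_one (by norm_num) (by norm_num) (le_mul_succ_div_two n)
    linarith [(hδ n).1]

end

theorem blocks_spanning_l1n_uniformly_almost_isometrically_general
    {𝕜 X : Type*} [RCLike 𝕜] [NormedAddCommGroup X] [NormedSpace 𝕜 X]
    {r : ℝ} (hr : 0 < r) (x : ℕ → X) (hx : ∀ j, ‖x j‖ ≤ 1)
    (hunif : ∀ n : ℕ, ∃ j : Fin n → ℕ, StrictMono j ∧
      ∀ α : Fin n → 𝕜,
        ‖∑ k, α k • x (j k)‖ ≤ ∑ k, ‖α k‖ ∧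
        r * ∑ k, ‖α k‖ ≤ ‖∑ k, α k • x (j k)‖) :
    ∃ (A : ℕ → Finset ℕ) (α : ℕ → 𝕜),
      (∀ i i' : ℕ, i ≠ i' → Disjoint (A i) (A i')) ∧
      (∀ i : ℕ, 1 ≤ i → ‖∑ j ∈ A i, α j • x j‖ = 1) ∧
      (∀ i : ℕ, 1 ≤ i → ∑ j ∈ A i, ‖α j‖ < (1 + (1/2 : ℝ) ^ i) / r) ∧
      (∀ n : ℕ, 1 ≤ n → ∀ β : ℕ → 𝕜,
        ‖∑ i ∈ Finset.Icc ((n - 1) * n / 2 + 1) (n * (n + 1) / 2),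
            β i • ∑ j ∈ A i, α j • x j‖
          ≤ ∑ i ∈ Finset.Icc ((n - 1) * n / 2 + 1) (n * (n + 1) / 2), ‖β i‖ ∧
        (1 - (1/2 : ℝ) ^ n) *
            ∑ i ∈ Finset.Icc ((n - 1) * n / 2 + 1) (n * (n + 1) / 2), ‖β i‖
          ≤ ‖∑ i ∈ Finset.Icc ((n - 1) * n / 2 + 1) (n * (n + 1) / 2),
              β i • ∑ j ∈ A i, α j • x j‖) := by
  obtain ⟨y, hdisj, hnorm, hl1, hest⟩ := exists_almost_isometric_block_sequence hr hx fun n =>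
    let ⟨j, hj, hj_est⟩ := hunif n
    ⟨j, hj, fun α => (hj_est α).2⟩
  obtain ⟨α, hα⟩ := exists_forall_mem_support_eq hdisj
  have hsum : ∀ i, ∑ j ∈ (y i).support, α j • x j = Finsupp.linearCombination 𝕜 x (y i) :=
    fun i => by
      rw [Finsupp.linearCombination_apply, Finsupp.sum]
      exact sum_congr rfl fun j hj => by rw [hα i j hj]
  have hsum_norm : ∀ i, ∑ j ∈ (y i).support, ‖α j‖ = l1Norm (y i) :=
    fun i => sum_congr rfl fun j hj => by rw [hα i j hj]
  refine ⟨fun i => (y i).support, α, fun i i' => @hdisj i i', fun i hi => by rw [hsum, hnorm i hi],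
    fun i hi => by rw [hsum_norm]; exact hl1 i hi, fun n _ β => ⟨?_, ?_⟩⟩
  · simp only [hsum]
    refine (norm_sum_le _ _).trans_eq (sum_congr rfl fun i hi => ?_)
    rw [norm_smul, hnorm i ((Nat.le_add_left 1 _).trans (mem_Icc.1 hi).1), mul_one]
  · have h := hest n fun i => β i
    simp only [sum_coe_sort (triangleBlock n) fun i => ‖β i‖,
      sum_coe_sort (triangleBlock n) fun i => β i • Finsupp.linearCombination 𝕜 x (y i)] at h
    simp only [hsum]
    exact h

/-- Let `X` be a Banach space, `r > 0`, and `(x j)` a sequence in the closed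
unit ball of `X` spanning the spaces `ℓ₁ⁿ` `r`-uniformly.  Then there are pairwise disjoint
finite sets `A i ⊆ ℕ` and scalars `α j` such that the blocks `y i = ∑_{j ∈ A i} α j • x j`
satisfy `‖y i‖ = 1`, `∑_{j ∈ A i} |α j| < (1 + 2⁻ⁱ)/r`, and for each `n ≥ 1` the finite
sequence `(y i)_{i ∈ B n}`, `B n = {1 + (n-1)n/2, …, n(n+1)/2}`, spans a `(1 - 2⁻ⁿ)`-copy
of `ℓ₁ⁿ`. -/
theorem blocks_spanning_l1n_uniformly_almost_isometrically
    {𝕜 X : Type*} [RCLike 𝕜] [NormedAddCommGroup X] [NormedSpace 𝕜 X] [CompleteSpace X]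
    {r : ℝ} (hr : 0 < r) (x : ℕ → X) (hx : ∀ j, ‖x j‖ ≤ 1)
    (hunif : ∀ n : ℕ, ∃ j : Fin n → ℕ, StrictMono j ∧
      ∀ α : Fin n → 𝕜,
        ‖∑ k, α k • x (j k)‖ ≤ ∑ k, ‖α k‖ ∧
        r * ∑ k, ‖α k‖ ≤ ‖∑ k, α k • x (j k)‖) :
    ∃ (A : ℕ → Finset ℕ) (α : ℕ → 𝕜),
      (∀ i i' : ℕ, i ≠ i' → Disjoint (A i) (A i')) ∧
      (∀ i : ℕ, 1 ≤ i → ‖∑ j ∈ A i, α j • x j‖ = 1) ∧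
      (∀ i : ℕ, 1 ≤ i → ∑ j ∈ A i, ‖α j‖ < (1 + (1/2 : ℝ) ^ i) / r) ∧
      (∀ n : ℕ, 1 ≤ n → ∀ β : ℕ → 𝕜,
        ‖∑ i ∈ Finset.Icc ((n - 1) * n / 2 + 1) (n * (n + 1) / 2),
            β i • ∑ j ∈ A i, α j • x j‖
          ≤ ∑ i ∈ Finset.Icc ((n - 1) * n / 2 + 1) (n * (n + 1) / 2), ‖β i‖ ∧
        (1 - (1/2 : ℝ) ^ n) *
            ∑ i ∈ Finset.Icc ((n - 1) * n / 2 + 1) (n * (n + 1) / 2), ‖β i‖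
          ≤ ‖∑ i ∈ Finset.Icc ((n - 1) * n / 2 + 1) (n * (n + 1) / 2),
              β i • ∑ j ∈ A i, α j • x j‖) :=
  blocks_spanning_l1n_uniformly_almost_isometrically_general hr x hx hunif
end

section
/- Let X be a Banach space, let r > 0, and let (x_j)_{j∈ℕ} be a sequence in the closed unit ball of X that spans the spaces ℓ₁ⁿ r-uniformly. Then there is a block sequence (y_i) of (x_j) that spans the spaces ℓ₁ⁿ uniformly almost isometrically, i.e., for every ε > 0 and every n ∈ ℕ there are indices i_1 < … < i_n such that y_{i_1}, …, y_{i_n} span a (1-ε)-copy of ℓ₁ⁿ. -/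
open Finset Function

section l1aux

variable {𝕜 X : Type*} [RCLike 𝕜] [NormedAddCommGroup X] [NormedSpace 𝕜 X]

private lemma extend_sum' {ι κ M : Type*} [Fintype ι] [Fintype κ] [DecidableEq κ]
    [AddCommMonoid M] {f : ι → κ} (hf : Function.Injective f) (β : ι → M) :
    ∑ t, Function.extend f β 0 t = ∑ k, β k := by
  classical
  have h1 : ∑ t ∈ Finset.univ.image f, Function.extend f β 0 t
      = ∑ t, Function.extend f β 0 t := by
    apply Finset.sum_subset (Finset.subset_univ _)
    intro t _ ht
    exact Function.extend_apply' _ _ _ (by simpa using ht)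
  rw [← h1, Finset.sum_image (fun a _ b _ h => hf h)]
  exact Finset.sum_congr rfl fun k _ => hf.extend_apply β 0 k

private lemma extend_smul_sum {ι κ : Type*} [Fintype ι] [Fintype κ] [DecidableEq κ]
    {f : ι → κ} (hf : Function.Injective f) (β : ι → 𝕜) (g : κ → X) :
    ∑ t, Function.extend f β 0 t • g t = ∑ k, β k • g (f k) := by
  have h : ∀ t, Function.extend f β 0 t • g t
      = Function.extend f (fun k => β k • g (f k)) 0 t := by
    intro t
    by_cases h : ∃ k, f k = t
    · obtain ⟨k, benannt⟩ := h
      subst benannt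
      rw [hf.extend_apply, hf.extend_apply]
    · rw [Function.extend_apply' _ _ _ h, Function.extend_apply' _ _ _ h]
      simp
  simp_rw [h]
  exact extend_sum' hf _

private lemma extend_norm_sum {ι κ : Type*} [Fintype ι] [Fintype κ] [DecidableEq κ]
    {f : ι → κ} (hf : Function.Injective f) (β : ι → 𝕜) :
    ∑ t, ‖Function.extend f β 0 t‖ = ∑ k, ‖β k‖ := by
  have h : ∀ t, ‖Function.extend f β 0 t‖
      = Function.extend f (fun k => ‖β k‖) 0 t := by
    intro t
    by_cases h : ∃ k, f k = t
    · obtain ⟨k, hk⟩ := h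
      subst hk
      rw [hf.extend_apply, hf.extend_apply]
    · rw [Function.extend_apply' _ _ _ h, Function.extend_apply' _ _ _ h]
      simp
  simp_rw [h]
  exact extend_sum' hf _

private lemma strictMono_fin_le {m : ℕ} {g : Fin m → ℕ} (hg : StrictMono g) :
    ∀ t : Fin m, (t : ℕ) ≤ g t := by
  suffices h : ∀ a (ha : a < m), a ≤ g ⟨a, ha⟩ from fun t => h t.1 t.2
  intro a
  induction a with
  | zero => intro ha; exact Nat.zero_le _
  | succ b ih =>
    intro ha
    have hb : b < m := Nat.lt_of_succ_lt ha
    have h2 : g ⟨b, hb⟩ < g ⟨b + 1, ha⟩ := hg (by simp [Fin.lt_def])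
    have h1 := ih hb
    omega

/-- A "system": `n` pairwise disjoint normalized blocks beyond `N`, whose
linear combinations satisfy a lower `ℓ₁`-estimate with constant `s`. -/
def IsSys (𝕜 : Type*) [RCLike 𝕜] {X : Type*} [NormedAddCommGroup X] [NormedSpace 𝕜 X]
    (x : ℕ → X) (s : ℝ) (n N : ℕ) : Prop :=
  ∃ (A : Fin n → Finset ℕ) (α : ℕ → 𝕜),
    (∀ k l, k ≠ l → Disjoint (A k) (A l)) ∧
    (∀ k, ∀ j ∈ A k, N < j) ∧
    (∀ k, ∑ j ∈ A k, ‖α j‖ = 1) ∧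
    (∀ β : Fin n → 𝕜, s * ∑ k, ‖β k‖ ≤ ‖∑ k, β k • ∑ j ∈ A k, α j • x j‖)

private lemma isSys_mono {x : ℕ → X} {s s' : ℝ} {n N : ℕ}
    (h : IsSys 𝕜 x s n N) (hss : s' ≤ s) : IsSys 𝕜 x s' n N := by
  obtain ⟨A, α, h1, h2, h3, h4⟩ := h
  refine ⟨A, α, h1, h2, h3, fun β => le_trans ?_ (h4 β)⟩
  exact mul_le_mul_of_nonneg_right hss (Finset.sum_nonneg fun k _ => norm_nonneg _)

private lemma isSys_zero {x : ℕ → X} {s : ℝ} {N : ℕ} : IsSys 𝕜 x s 0 N := by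
  refine ⟨fun k => k.elim0, fun _ => 0, fun k => k.elim0, fun k => k.elim0,
    fun k => k.elim0, fun β => ?_⟩
  simp

private lemma isSys_le_one {x : ℕ → X} (hx : ∀ j, ‖x j‖ ≤ 1) {s : ℝ}
    (h : IsSys 𝕜 x s 1 0) : s ≤ 1 := by
  obtain ⟨A, α, _, _, hsum, hlow⟩ := h
  have h1 := hlow (fun _ => (1 : 𝕜))
  simp only [Fin.sum_univ_one, norm_one, mul_one, one_smul] at h1
  have h2 : ‖∑ j ∈ A 0, α j • x j‖ ≤ 1 := by
    calc ‖∑ j ∈ A 0, α j • x j‖ ≤ ∑ j ∈ A 0, ‖α j • x j‖ := norm_sum_le _ _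
    _ ≤ ∑ j ∈ A 0, ‖α j‖ := Finset.sum_le_sum fun j _ => by
        rw [norm_smul]
        exact mul_le_of_le_one_right (norm_nonneg _) (hx j)
    _ = 1 := hsum 0
  linarith

private lemma isSys_base {r : ℝ} (x : ℕ → X)
    (hunif : ∀ n : ℕ, ∃ j : Fin n → ℕ, StrictMono j ∧
      ∀ α : Fin n → 𝕜,
        ‖∑ k, α k • x (j k)‖ ≤ ∑ k, ‖α k‖ ∧
        r * ∑ k, ‖α k‖ ≤ ‖∑ k, α k • x (j k)‖) (n N : ℕ) :
    IsSys 𝕜 x r n N := by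
  obtain ⟨j, hj, hjb⟩ := hunif (N + 1 + n)
  have hfin : ∀ k : Fin n, (N + 1 + (k : ℕ)) < N + 1 + n := by omega
  set f : Fin n → Fin (N + 1 + n) := fun k => ⟨N + 1 + k, hfin k⟩ with hfdef
  have hfinj : Function.Injective f := by
    intro a b hab
    simp only [hfdef, Fin.mk.injEq] at hab
    exact Fin.ext (by omega)
  refine ⟨fun k => {j (f k)}, fun _ => 1, ?_, ?_, by simp, ?_⟩
  · intro k l hkl
    rw [Finset.disjoint_singleton]
    exact fun h => hkl (hfinj (hj.injective h))
  · intro k jj hjj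
    rw [Finset.mem_singleton] at hjj
    subst hjj
    have h1 : ((f k : ℕ)) ≤ j (f k) := strictMono_fin_le hj (f k)
    have h2 : ((f k : ℕ)) = N + 1 + k := rfl
    omega
  · intro β
    have h := (hjb (Function.extend f β 0)).2
    rw [extend_norm_sum hfinj, extend_smul_sum hfinj] at h
    simpa using h


private lemma key_lemma {𝕜 X : Type*} [RCLike 𝕜] [NormedAddCommGroup X] [NormedSpace 𝕜 X]
    {r : ℝ} (hr : 0 < r) (x : ℕ → X) (hx : ∀ j, ‖x j‖ ≤ 1)
    (hT : ∀ n N : ℕ, IsSys 𝕜 x r n N)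
    {ε : ℝ} (hε : 0 < ε) (hε2 : ε ≤ 1 / 2) (n N : ℕ) :
    ∃ (A : Fin n → Finset ℕ) (α : ℕ → 𝕜),
      (∀ k l, k ≠ l → Disjoint (A k) (A l)) ∧ (∀ k, ∀ j ∈ A k, N < j) ∧
      ∀ β : Fin n → 𝕜,
        ‖∑ k, β k • ∑ j ∈ A k, α j • x j‖ ≤ ∑ k, ‖β k‖ ∧
        (1 - ε) * ∑ k, ‖β k‖ ≤ ‖∑ k, β k • ∑ j ∈ A k, α j • x j‖ := by
  classical
  set T : Set ℝ := {s | ∀ n N : ℕ, IsSys 𝕜 x s n N} with hTdef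
  have hrT : r ∈ T := hT
  have hbdd : BddAbove T := ⟨1, fun s hs => isSys_le_one hx (hs 1 0)⟩
  set lam := sSup T with hlamdef
  have hlam_r : r ≤ lam := le_csSup hbdd hrT
  have hlam_pos : 0 < lam := lt_of_lt_of_le hr hlam_r
  set δ := lam * ε / 2 with hδdef
  have hδ_pos : 0 < δ := by positivity
  have hδ_lt : δ < lam := by nlinarith
  have hlow : lam - δ ∈ T := by
    obtain ⟨s, hsT, hs⟩ := exists_lt_of_lt_csSup ⟨r, hrT⟩ (by linarith : lam - δ < lam)
    intro n N
    exact isSys_mono (hsT n N) (le_of_lt hs)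
  have hup : (lam + δ) ∉ T := fun h => absurd (le_csSup hbdd h) (by linarith)
  simp only [hTdef, Set.mem_setOf_eq] at hup
  push_neg at hup
  obtain ⟨m₀, N₁, hnot⟩ := hup
  have hm₀ : m₀ ≠ 0 := by
    rintro rfl
    exact hnot isSys_zero
  set N₂ := max N N₁ with hN₂
  obtain ⟨A, α, hdis, hbey, hsum, hlowb⟩ := hlow (m₀ * n) N₂
  set e : Fin m₀ × Fin n ≃ Fin (m₀ * n) := finProdFinEquiv with hedef
  set f : Fin n → Fin m₀ → Fin (m₀ * n) := fun k i => e (i, k) with hfdef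
  have hfinj : ∀ {k k' : Fin n} {i i' : Fin m₀}, f k i = f k' i' → i = i' ∧ k = k' := by
    intro k k' i i' h
    have h2 := e.injective h
    exact ⟨congrArg Prod.fst h2, congrArg Prod.snd h2⟩
  have hfkinj : ∀ k : Fin n, Function.Injective (f k) := fun k i i' h => (hfinj h).1
  have hsub : ∀ k : Fin n, ∃ γ : Fin m₀ → 𝕜,
      ‖∑ i, γ i • ∑ j ∈ A (f k i), α j • x j‖ < (lam + δ) * ∑ i, ‖γ i‖ := by
    intro k
    by_contra hcon
    push_neg at hcon
    apply hnot
    refine ⟨fun i => A (f k i), α, ?_, ?_, fun i => hsum (f k i), fun γ => hcon γ⟩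
    · intro i i' hii'
      exact hdis _ _ fun h => hii' (hfinj h).1
    · intro i j hj
      exact lt_of_le_of_lt (le_max_right N N₁) (hbey (f k i) j hj)
  choose γ hγ using hsub
  set c : Fin n → ℝ := fun k => ∑ i, ‖γ k i‖ with hcdef
  set u : Fin n → X := fun k => ∑ i, γ k i • ∑ j ∈ A (f k i), α j • x j with hudef
  have hu_low : ∀ k, (lam - δ) * c k ≤ ‖u k‖ := by
    intro k
    have h := hlowb (Function.extend (f k) (γ k) 0)
    rwa [extend_norm_sum (hfkinj k), extend_smul_sum (hfkinj k)] at h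
  have hc_nonneg : ∀ k, 0 ≤ c k := fun k => Finset.sum_nonneg fun i _ => norm_nonneg _
  have hc_pos : ∀ k, 0 < c k := by
    intro k
    rcases (hc_nonneg k).lt_or_eq with h | h
    · exact h
    · exfalso
      have h2 := hγ k
      have h3 : ∑ i, ‖γ k i‖ = c k := rfl
      rw [h3, ← h, mul_zero] at h2
      exact absurd h2 (not_lt.2 (norm_nonneg _))
  have hu_pos : ∀ k, 0 < ‖u k‖ := fun k =>
    lt_of_lt_of_le (mul_pos (by linarith) (hc_pos k)) (hu_low k)
  set A' : Fin n → Finset ℕ := fun k => Finset.univ.biUnion (fun i => A (f k i)) with hA'def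
  set coef : ℕ → 𝕜 := fun j =>
    ∑ k, ∑ i, if j ∈ A (f k i) then γ k i / ((‖u k‖ : 𝕜)) else 0 with hcoefdef
  set α' : ℕ → 𝕜 := fun j => coef j * α j with hα'def
  have hval : ∀ (k : Fin n) (i : Fin m₀), ∀ j ∈ A (f k i),
      coef j = γ k i / ((‖u k‖ : 𝕜)) := by
    intro k i j hj
    rw [hcoefdef]
    dsimp only
    rw [Finset.sum_eq_single k, Finset.sum_eq_single i, if_pos hj]
    · intro i' _ hi'
      rw [if_neg]
      intro hj'
      by_cases hef : f k i' = f k i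
      · exact hi' (hfinj hef).1
      · exact (Finset.disjoint_left.mp (hdis _ _ hef) hj') hj
    · intro hi
      exact absurd (Finset.mem_univ i) hi
    · intro k' _ hk'
      apply Finset.sum_eq_zero
      intro i' _
      rw [if_neg]
      intro hj'
      have hef : f k' i' ≠ f k i := fun h => hk' (hfinj h).2
      exact (Finset.disjoint_left.mp (hdis _ _ hef) hj') hj
    · intro hk
      exact absurd (Finset.mem_univ k) hk
  have hpd : ∀ k : Fin n,
      Set.PairwiseDisjoint (Finset.univ : Finset (Fin m₀)) (fun i => A (f k i)) :=
    fun k i _ i' _ hii' => hdis _ _ fun h => hii' (hfinj h).1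
  have hy : ∀ k, ∑ j ∈ A' k, α' j • x j = ((‖u k‖ : 𝕜))⁻¹ • u k := by
    intro k
    rw [hA'def]
    dsimp only
    rw [Finset.sum_biUnion (hpd k), hudef]
    dsimp only
    rw [Finset.smul_sum]
    refine Finset.sum_congr rfl fun i _ => ?_
    rw [Finset.smul_sum, Finset.smul_sum]
    refine Finset.sum_congr rfl fun j hj => ?_
    rw [hα'def]
    dsimp only
    rw [hval k i j hj, div_eq_inv_mul, mul_assoc, mul_smul, mul_smul]
  have hy_norm : ∀ k, ‖∑ j ∈ A' k, α' j • x j‖ = 1 := by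
    intro k
    rw [hy k, norm_smul, norm_inv, RCLike.norm_ofReal, abs_of_pos (hu_pos k),
      inv_mul_cancel₀ (ne_of_gt (hu_pos k))]
  refine ⟨A', α', ?_, ?_, ?_⟩
  · intro k l hkl
    rw [Finset.disjoint_left]
    intro j hj hj'
    rw [hA'def] at hj hj'
    simp only [Finset.mem_biUnion, Finset.mem_univ, true_and] at hj hj'
    obtain ⟨i, hi⟩ := hj
    obtain ⟨i', hi'⟩ := hj'
    have hef : f k i ≠ f l i' := fun h => hkl (hfinj h).2
    exact (Finset.disjoint_left.mp (hdis _ _ hef) hi) hi'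
  · intro k j hj
    rw [hA'def] at hj
    simp only [Finset.mem_biUnion, Finset.mem_univ, true_and] at hj
    obtain ⟨i, hi⟩ := hj
    exact lt_of_le_of_lt (le_max_left N N₁) (hbey (f k i) j hi)
  · intro β
    constructor
    · calc ‖∑ k, β k • ∑ j ∈ A' k, α' j • x j‖
          ≤ ∑ k, ‖β k • ∑ j ∈ A' k, α' j • x j‖ := norm_sum_le _ _
      _ = ∑ k, ‖β k‖ := by
          refine Finset.sum_congr rfl fun k _ => ?_
          rw [norm_smul, hy_norm k, mul_one]
    · set B : Fin (m₀ * n) → 𝕜 := fun t =>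
        (β (e.symm t).2 * ((‖u ((e.symm t).2)‖ : 𝕜))⁻¹) * γ (e.symm t).2 (e.symm t).1 with hBdef
      have hBsum : ∑ t, B t • (∑ j ∈ A t, α j • x j)
          = ∑ k, β k • ∑ j ∈ A' k, α' j • x j := by
        rw [← Equiv.sum_comp e (fun t => B t • (∑ j ∈ A t, α j • x j))]
        rw [Fintype.sum_prod_type]
        rw [Finset.sum_comm]
        refine Finset.sum_congr rfl fun k _ => ?_
        rw [hy k]
        have : ∀ i : Fin m₀, B (e (i, k)) • (∑ j ∈ A (e (i, k)), α j • x j)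
            = (β k * ((‖u k‖ : 𝕜))⁻¹) • (γ k i • ∑ j ∈ A (f k i), α j • x j) := by
          intro i
          rw [hBdef]
          dsimp only
          rw [Equiv.symm_apply_apply]
          rw [mul_smul, hfdef]
        simp_rw [this]
        rw [← Finset.smul_sum, mul_smul]
      have hBnorm : ∑ t, ‖B t‖ = ∑ k, ‖β k‖ * (‖u k‖⁻¹ * c k) := by
        rw [← Equiv.sum_comp e (fun t => ‖B t‖)]
        rw [Fintype.sum_prod_type]
        rw [Finset.sum_comm]
        refine Finset.sum_congr rfl fun k _ => ?_
        have : ∀ i : Fin m₀, ‖B (e (i, k))‖ = (‖β k‖ * ‖u k‖⁻¹) * ‖γ k i‖ := by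
          intro i
          rw [hBdef]
          dsimp only
          rw [Equiv.symm_apply_apply, norm_mul, norm_mul, norm_inv, RCLike.norm_ofReal,
            abs_of_pos (hu_pos k)]
        simp_rw [this]
        rw [← Finset.mul_sum, hcdef]
        ring
      have hterm : ∀ k : Fin n, (1 - ε) * ‖β k‖
          ≤ (lam - δ) * (‖β k‖ * (‖u k‖⁻¹ * c k)) := by
        intro k
        have h1 : ‖u k‖ ≤ (lam + δ) * c k := (hγ k).le
        have h2 := hu_pos k
        have h3 := hc_pos k
        have h4 : (lam + δ)⁻¹ * ‖u k‖ ≤ c k := by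
          have := mul_le_mul_of_nonneg_left h1 (le_of_lt (inv_pos.2 (by linarith : (0:ℝ) < lam + δ)))
          rwa [inv_mul_cancel_left₀ (by positivity : (lam + δ) ≠ 0)] at this
        have h5 : (lam + δ)⁻¹ ≤ ‖u k‖⁻¹ * c k := by
          rw [← div_eq_inv_mul, le_div_iff₀ h2]
          exact h4
        have h6 : (1 - ε) * (lam + δ) ≤ lam - δ := by nlinarith
        have h7 : (1 - ε) ≤ (lam - δ) * ((lam + δ)⁻¹) := by
          rw [← div_eq_mul_inv, le_div_iff₀ (by linarith : (0:ℝ) < lam + δ)]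
          exact h6
        have h8 : (1 - ε) ≤ (lam - δ) * (‖u k‖⁻¹ * c k) :=
          le_trans h7 (mul_le_mul_of_nonneg_left h5 (by linarith))
        calc (1 - ε) * ‖β k‖ ≤ ((lam - δ) * (‖u k‖⁻¹ * c k)) * ‖β k‖ :=
              mul_le_mul_of_nonneg_right h8 (norm_nonneg _)
        _ = (lam - δ) * (‖β k‖ * (‖u k‖⁻¹ * c k)) := by ring
      calc (1 - ε) * ∑ k, ‖β k‖ = ∑ k, (1 - ε) * ‖β k‖ := Finset.mul_sum _ _ _
      _ ≤ ∑ k, (lam - δ) * (‖β k‖ * (‖u k‖⁻¹ * c k)) := Finset.sum_le_sum fun k _ => hterm k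
      _ = (lam - δ) * ∑ k, ‖β k‖ * (‖u k‖⁻¹ * c k) := (Finset.mul_sum _ _ _).symm
      _ = (lam - δ) * ∑ t, ‖B t‖ := by rw [hBnorm]
      _ ≤ ‖∑ t, B t • (∑ j ∈ A t, α j • x j)‖ := hlowb B
      _ = ‖∑ k, β k • ∑ j ∈ A' k, α' j • x j‖ := by rw [hBsum]
end l1aux

/-- If a sequence `(x j)` in the closed unit ball of a Banach space spans
the spaces `ℓ₁ⁿ` `r`-uniformly (`r > 0`), then there is a block sequence
`y i = ∑_{j ∈ A i} α j • x j` (with the `A i` finite and pairwise disjoint) spanning the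
spaces `ℓ₁ⁿ` uniformly almost isometrically: for every `ε > 0` and every `n` there are
indices `i₁ < … < i_n` such that `y i₁, …, y i_n` span a `(1 - ε)`-copy of `ℓ₁ⁿ`. -/
theorem block_sequence_spans_l1n_uniformly_almost_isometrically
    {𝕜 X : Type*} [RCLike 𝕜] [NormedAddCommGroup X] [NormedSpace 𝕜 X] [CompleteSpace X]
    {r : ℝ} (hr : 0 < r) (x : ℕ → X) (hx : ∀ j, ‖x j‖ ≤ 1)
    (hunif : ∀ n : ℕ, ∃ j : Fin n → ℕ, StrictMono j ∧
      ∀ α : Fin n → 𝕜,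
        ‖∑ k, α k • x (j k)‖ ≤ ∑ k, ‖α k‖ ∧
        r * ∑ k, ‖α k‖ ≤ ‖∑ k, α k • x (j k)‖) :
    ∃ (A : ℕ → Finset ℕ) (α : ℕ → 𝕜),
      (∀ i i' : ℕ, i ≠ i' → Disjoint (A i) (A i')) ∧
      ∀ ε : ℝ, 0 < ε → ∀ n : ℕ, ∃ i : Fin n → ℕ, StrictMono i ∧
        ∀ β : Fin n → 𝕜,
          ‖∑ k, β k • ∑ j ∈ A (i k), α j • x j‖ ≤ ∑ k, ‖β k‖ ∧
          (1 - ε) * ∑ k, ‖β k‖ ≤ ‖∑ k, β k • ∑ j ∈ A (i k), α j • x j‖ := by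
  classical
  have hT : ∀ n N : ℕ, IsSys 𝕜 x r n N := isSys_base x hunif
  -- batches: for each code `t` and each starting point `N`, a finite family of blocks
  -- realizing an almost isometric copy of `ℓ₁ⁿ` with `n = (unpair t).2`,
  -- `ε = 1/((unpair t).1 + 2)`, supported in `(N, M]`.
  have batches : ∀ t N : ℕ, ∃ (A : ℕ → Finset ℕ) (α : ℕ → 𝕜) (M : ℕ),
      N ≤ M ∧ (∀ k l : ℕ, k ≠ l → Disjoint (A k) (A l)) ∧
      (∀ k : ℕ, ∀ j ∈ A k, N < j ∧ j ≤ M) ∧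
      ∀ β : Fin (Nat.unpair t).2 → 𝕜,
        ‖∑ k, β k • ∑ j ∈ A (k : ℕ), α j • x j‖ ≤ ∑ k, ‖β k‖ ∧
        (1 - 1 / (((Nat.unpair t).1 : ℝ) + 2)) * ∑ k, ‖β k‖
          ≤ ‖∑ k, β k • ∑ j ∈ A (k : ℕ), α j • x j‖ := by
    intro t N
    set a : ℕ := (Nat.unpair t).1 with hadef
    set n : ℕ := (Nat.unpair t).2 with hndef
    have hεpos : (0 : ℝ) < 1 / ((a : ℝ) + 2) := by positivity
    have hεle : (1 : ℝ) / ((a : ℝ) + 2) ≤ 1 / 2 := by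
      apply one_div_le_one_div_of_le
      · norm_num
      · have : (0 : ℝ) ≤ (a : ℝ) := Nat.cast_nonneg a
        linarith
    obtain ⟨A, α, hdis, hbey, hbounds⟩ := key_lemma hr x hx hT hεpos hεle n N
    refine ⟨fun k => if h : k < n then A ⟨k, h⟩ else ∅, α,
      N + 1 + Finset.univ.sup (fun k : Fin n => (A k).sup id), by omega, ?_, ?_, ?_⟩
    · intro k l hkl
      dsimp only
      by_cases h1 : k < n
      · by_cases h2 : l < n
        · rw [dif_pos h1, dif_pos h2]
          exact hdis _ _ (fun h => hkl (by simpa using congrArg Fin.val h))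
        · rw [dif_neg h2]
          exact Finset.disjoint_empty_right _
      · rw [dif_neg h1]
        exact Finset.disjoint_empty_left _
    · intro k j hj
      dsimp only at hj
      by_cases h1 : k < n
      · rw [dif_pos h1] at hj
        constructor
        · exact hbey ⟨k, h1⟩ j hj
        · have e1 : j ≤ (A ⟨k, h1⟩).sup id := Finset.le_sup (f := id) hj
          have e2 : (A ⟨k, h1⟩).sup id ≤ Finset.univ.sup (fun k : Fin n => (A k).sup id) :=
            Finset.le_sup (f := fun k : Fin n => (A k).sup id) (Finset.mem_univ (⟨k, h1⟩ : Fin n))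
          omega
      · rw [dif_neg h1] at hj
        exact absurd hj (Finset.notMem_empty j)
    · intro β
      have heq : ∀ k : Fin n,
          (if h : (k : ℕ) < n then A ⟨(k : ℕ), h⟩ else ∅) = A k := by
        intro k
        rw [dif_pos k.2]
      have hgoal : (∑ k, β k • ∑ j ∈ (if h : (k : ℕ) < n then A ⟨(k : ℕ), h⟩ else ∅),
            α j • x j) = ∑ k, β k • ∑ j ∈ A k, α j • x j := by
        refine Finset.sum_congr rfl fun k _ => ?_
        rw [heq k]
      rw [hgoal]
      exact hbounds β
  choose FA Fα FM hFM hFdis hFbey hFbounds using batches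
  set Nst : ℕ → ℕ := fun t => Nat.rec 0 (fun t' ih => FM t' ih) t with hNstdef
  have hNstS : ∀ t, Nst (t + 1) = FM t (Nst t) := fun t => rfl
  have hNmono : Monotone Nst := monotone_nat_of_le_succ fun t => by
    rw [hNstS]; exact hFM t (Nst t)
  have hsupp : ∀ t k j, j ∈ FA t (Nst t) k → Nst t < j ∧ j ≤ Nst (t + 1) := by
    intro t k j hj
    rw [hNstS]
    exact hFbey t (Nst t) k j hj
  have uniq : ∀ t t' k k' j, j ∈ FA t (Nst t) k → j ∈ FA t' (Nst t') k' → t = t' := by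
    have half : ∀ t t' k k' j, t < t' → j ∈ FA t (Nst t) k → j ∈ FA t' (Nst t') k' → False := by
      intro t t' k k' j hlt h1 h2
      have a1 := (hsupp t k j h1).2
      have a2 := (hsupp t' k' j h2).1
      have a3 : Nst (t + 1) ≤ Nst t' := hNmono hlt
      omega
    intro t t' k k' j h1 h2
    rcases Nat.lt_trichotomy t t' with h | h | h
    · exact absurd (half t t' k k' j h h1 h2) not_false
    · exact h
    · exact absurd (half t' t k' k j h h2 h1) not_false
  set Ag : ℕ → Finset ℕ :=
    fun p => FA (Nat.unpair p).1 (Nst (Nat.unpair p).1) (Nat.unpair p).2 with hAgdef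
  set αg : ℕ → 𝕜 := fun j =>
    if h : ∃ t k, j ∈ FA t (Nst t) k then Fα h.choose (Nst h.choose) j else 0 with hαgdef
  have hαg_eq : ∀ t k j, j ∈ FA t (Nst t) k → αg j = Fα t (Nst t) j := by
    intro t k j hj
    have h : ∃ t k, j ∈ FA t (Nst t) k := ⟨t, k, hj⟩
    rw [hαgdef]
    dsimp only
    rw [dif_pos h]
    obtain ⟨k', hk'⟩ := h.choose_spec
    rw [uniq h.choose t k' k j hk' hj]
  refine ⟨Ag, αg, ?_, ?_⟩
  · intro p p' hpp'
    rw [Finset.disjoint_left]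
    intro j hj hj'
    rw [hAgdef] at hj hj'
    dsimp only at hj hj'
    have ht : (Nat.unpair p).1 = (Nat.unpair p').1 := uniq _ _ _ _ j hj hj'
    have hk : (Nat.unpair p).2 ≠ (Nat.unpair p').2 := by
      intro hk2
      apply hpp'
      have : Nat.unpair p = Nat.unpair p' := Prod.ext ht hk2
      have e1 := Nat.pair_unpair p
      have e2 := Nat.pair_unpair p'
      rw [← e1, ← e2, this]
    rw [ht] at hj
    exact (Finset.disjoint_left.mp
      (hFdis (Nat.unpair p').1 (Nst (Nat.unpair p').1) _ _ hk) hj) hj'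
  · intro ε hε n
    have haε : 1 / (((⌈1 / ε⌉₊ : ℕ) : ℝ) + 2) ≤ ε := by
      have h1 : 1 / ε ≤ ((⌈1 / ε⌉₊ : ℕ) : ℝ) := Nat.le_ceil _
      rw [div_le_iff₀ (by positivity)]
      have h2 : ε * (1 / ε) = 1 := by
        field_simp
      nlinarith
    obtain ⟨t, hta, htn⟩ : ∃ t, (Nat.unpair t).1 = ⌈1 / ε⌉₊ ∧ (Nat.unpair t).2 = n :=
      ⟨Nat.pair ⌈1 / ε⌉₊ n, by simp, by simp⟩
    subst htn
    refine ⟨fun k => Nat.pair t (k : ℕ), ?_, ?_⟩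
    · intro k k' hkk'
      exact Nat.pair_lt_pair_right t hkk'
    · intro β
      have hb := hFbounds t (Nst t) β
      have hblock : ∀ k : Fin (Nat.unpair t).2,
          (∑ j ∈ Ag (Nat.pair t (k : ℕ)), αg j • x j)
            = ∑ j ∈ FA t (Nst t) (k : ℕ), Fα t (Nst t) j • x j := by
        intro k
        have hA : Ag (Nat.pair t (k : ℕ)) = FA t (Nst t) (k : ℕ) := by
          rw [hAgdef]
          dsimp only
          rw [Nat.unpair_pair]
        rw [hA]
        exact Finset.sum_congr rfl fun j hj => by rw [hαg_eq t (k : ℕ) j hj]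
      have hgoal : (∑ k, β k • ∑ j ∈ Ag (Nat.pair t (k : ℕ)), αg j • x j)
          = ∑ k, β k • ∑ j ∈ FA t (Nst t) (k : ℕ), Fα t (Nst t) j • x j := by
        refine Finset.sum_congr rfl fun k _ => ?_
        rw [hblock k]
      rw [hgoal]
      refine ⟨hb.1, le_trans ?_ hb.2⟩
      apply mul_le_mul_of_nonneg_right
      · rw [hta]
        linarith
      · exact Finset.sum_nonneg fun k _ => norm_nonneg _
end

section
/- Let X be a Banach space, let r > 0, and let (x_j)_{j∈ℕ} be a sequence in the closed unit ball of X that spans the spaces ℓ₁ⁿ r-uniformly. Then for every n ∈ ℕ and every p ∈ ℕ there exist pairwise disjoint finite subsets A_1, …, A_n of {p+1, p+2, …} and scalars (γ_j) such that the blocks z_l = ∑_{j∈A_l} γ_j x_j (l = 1, …, n) satisfy: (i) ‖z_l‖ = 1; (ii) ∑_{j∈A_l} |γ_j| < (1 + 2^{-n(n+1)/2})/r; and (iii) ‖∑_{l=1}^n β_l z_l‖ ≥ (1 - 2^{-n}) ∑_{l=1}^n |β_l| for all scalars β_l. -/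
open Finset

section auxJames

variable {𝕜 X : Type*} [RCLike 𝕜] [NormedAddCommGroup X] [NormedSpace 𝕜 X]

private lemma aux_sum_extend {N : ℕ} {κ : Type*} [Fintype κ] {M : Type*} [AddCommMonoid M]
    (ι : κ → Fin N) (hι : Function.Injective ι) (α : κ → 𝕜)
    (f : Fin N → 𝕜 → M) (hf : ∀ i, f i 0 = 0) :
    ∑ i, f i (Function.extend ι α 0 i) = ∑ k, f (ι k) (α k) := by
  classical
  have h1 : ∑ i, f i (Function.extend ι α 0 i)
      = ∑ i ∈ Finset.image ι Finset.univ, f i (Function.extend ι α 0 i) := by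
    refine (Finset.sum_subset (Finset.subset_univ _) ?_).symm
    intro i _ hi
    have hni : ¬ ∃ k, ι k = i := by simpa [Finset.mem_image] using hi
    rw [Function.extend_apply' _ _ _ hni]
    simpa using hf i
  rw [h1, Finset.sum_image (fun a _ b _ h => hι h)]
  refine Finset.sum_congr rfl fun k _ => ?_
  rw [hι.extend_apply]

private lemma aux_restrict {κ : Type*} [Fintype κ] (x : ℕ → X) {t : ℝ} {N : ℕ} (j : Fin N → ℕ)
    (hb : ∀ α : Fin N → 𝕜, t * ∑ k, ‖α k‖ ≤ ‖∑ k, α k • x (j k)‖)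
    {ι : κ → Fin N} (hι : Function.Injective ι) (α : κ → 𝕜) :
    t * ∑ k, ‖α k‖ ≤ ‖∑ k, α k • x (j (ι k))‖ := by
  have h1 := aux_sum_extend (M := ℝ) ι hι α (fun _ a => ‖a‖) (fun _ => norm_zero)
  have h2 := aux_sum_extend (M := X) ι hι α (fun i a => a • x (j i)) (fun i => zero_smul 𝕜 _)
  rw [← h1, ← h2]
  exact hb _

private lemma aux_chunk_div {m l k : ℕ} (hm : 0 < m) (hk : k < m) : (l * m + k) / m = l := by
  have h : l * m + k = k + m * l := by ring
  rw [h, Nat.add_mul_div_left _ _ hm, Nat.div_eq_of_lt hk, Nat.zero_add]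

private lemma aux_strictMono_ge {N : ℕ} (j : Fin N → ℕ) (hj : StrictMono j) :
    ∀ v (hv : v < N), v ≤ j ⟨v, hv⟩ := by
  intro v
  induction v with
  | zero => intro _; exact Nat.zero_le _
  | succ w ih =>
    intro hv
    have hw : w < N := by omega
    exact Nat.lt_of_le_of_lt (ih hw)
      (hj (show (⟨w, hw⟩ : Fin N) < ⟨w+1, hv⟩ from by simp [Fin.lt_def]))

end auxJames

set_option maxHeartbeats 1000000 in
/-- If `(x j)` is a sequence in the closed unit ball of a Banach space
spanning the spaces `ℓ₁ⁿ` `r`-uniformly (`r > 0`), then for every `n` and every `p` there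
exist pairwise disjoint finite sets `A₁, …, A_n ⊆ {p+1, p+2, …}` and scalars `γ_j` such
that the blocks `z_l = ∑_{j ∈ A_l} γ_j • x j` satisfy `‖z_l‖ = 1`,
`∑_{j ∈ A_l} |γ_j| < (1 + 2^{-n(n+1)/2})/r`, and
`‖∑ β_l • z_l‖ ≥ (1 - 2⁻ⁿ) ∑ |β_l|` for all scalars `β_l`. -/
theorem normalized_blocks_beyond_p_spanning_l1n
    {𝕜 X : Type*} [RCLike 𝕜] [NormedAddCommGroup X] [NormedSpace 𝕜 X] [CompleteSpace X]
    {r : ℝ} (hr : 0 < r) (x : ℕ → X) (hx : ∀ j, ‖x j‖ ≤ 1)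
    (hunif : ∀ n : ℕ, ∃ j : Fin n → ℕ, StrictMono j ∧
      ∀ α : Fin n → 𝕜,
        ‖∑ k, α k • x (j k)‖ ≤ ∑ k, ‖α k‖ ∧
        r * ∑ k, ‖α k‖ ≤ ‖∑ k, α k • x (j k)‖) :
    ∀ n p : ℕ, ∃ (A : Fin n → Finset ℕ) (γ : ℕ → 𝕜),
      (∀ l l' : Fin n, l ≠ l' → Disjoint (A l) (A l')) ∧
      (∀ l : Fin n, ∀ j ∈ A l, p < j) ∧
      (∀ l : Fin n, ‖∑ j ∈ A l, γ j • x j‖ = 1) ∧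
      (∀ l : Fin n, ∑ j ∈ A l, ‖γ j‖ < (1 + (1/2 : ℝ) ^ (n * (n + 1) / 2)) / r) ∧
      (∀ β : Fin n → 𝕜,
        (1 - (1/2 : ℝ) ^ n) * ∑ l, ‖β l‖ ≤ ‖∑ l, β l • ∑ j ∈ A l, γ j • x j‖) := by
  classical
  intro n p
  rcases Nat.eq_zero_or_pos n with hn | hn
  · subst hn
    refine ⟨fun l => l.elim0, 0, fun l => l.elim0, fun l => l.elim0, fun l => l.elim0,
      fun l => l.elim0, ?_⟩
    intro β
    simp
  -- the set of tail ℓ₁-constants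
  set TS : Set ℝ := {t : ℝ | ∀ q N : ℕ, ∃ j : Fin N → ℕ, StrictMono j ∧ (∀ k, q < j k) ∧
    ∀ α : Fin N → 𝕜, t * ∑ k, ‖α k‖ ≤ ‖∑ k, α k • x (j k)‖} with hTS
  have hPr : r ∈ TS := by
    simp only [hTS, Set.mem_setOf_eq]
    intro q N
    obtain ⟨j, hmono, hj⟩ := hunif (q + 1 + N)
    have hnatmono : StrictMono (fun k : Fin N => Fin.natAdd (q+1) k) := by
      intro a b hab
      rw [Fin.lt_def] at hab ⊢
      simpa using hab
    refine ⟨fun k => j (Fin.natAdd (q+1) k), hmono.comp hnatmono, ?_, ?_⟩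
    · intro k
      have hge := aux_strictMono_ge j hmono (q + 1 + k.val) (Fin.natAdd (q+1) k).isLt
      show q < j (Fin.natAdd (q+1) k)
      have heq : Fin.natAdd (q+1) k = ⟨q + 1 + k.val, (Fin.natAdd (q+1) k).isLt⟩ := rfl
      rw [heq]
      exact Nat.lt_of_lt_of_le (by omega) hge
    · intro α
      exact aux_restrict x j (fun α' => (hj α').2) hnatmono.injective α
  have hbdd : BddAbove TS := by
    refine ⟨1, fun t ht => ?_⟩
    simp only [hTS, Set.mem_setOf_eq] at ht
    obtain ⟨j, -, -, hlow⟩ := ht 0 1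
    have h := hlow (fun _ => 1)
    simp only [Fin.sum_univ_one, norm_one, mul_one, one_smul] at h
    exact h.trans (hx _)
  set s := sSup TS with hsdef
  have hrs : r ≤ s := le_csSup hbdd hPr
  set E := n * (n + 1) / 2 with hE
  have hnE : n ≤ E := by
    have h2 : n * 2 ≤ n * (n + 1) := Nat.mul_le_mul_left n (by omega)
    have h3 : n * 2 / 2 ≤ n * (n + 1) / 2 := Nat.div_le_div_right h2
    have h4 : n * 2 / 2 = n := by omega
    rw [hE]
    omega
  have hE1 : 1 ≤ E := le_trans hn hnE
  set c1 : ℝ := (1/2 : ℝ) ^ E with hc1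
  set c2 : ℝ := (1/2 : ℝ) ^ n with hc2
  have hc1pos : 0 < c1 := by rw [hc1]; positivity
  have hc1le : c1 ≤ 1/2 := by
    rw [hc1]
    calc (1/2 : ℝ) ^ E ≤ (1/2 : ℝ) ^ 1 := pow_le_pow_of_le_one (by norm_num) (by norm_num) hE1
    _ = 1/2 := pow_one _
  have hc12 : c1 ≤ c2 := by
    rw [hc1, hc2]
    exact pow_le_pow_of_le_one (by norm_num) (by norm_num) hnE
  have hc2pos : 0 < c2 := by rw [hc2]; positivity
  set δ : ℝ := r * c1 / 2 with hδdef
  have hδpos : 0 < δ := by rw [hδdef]; positivity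
  have hδlt : δ < r := by
    rw [hδdef]
    nlinarith
  have hsδpos : 0 < s - δ := by linarith
  have hsδppos : 0 < s + δ := by linarith
  -- s - δ is a tail ℓ₁-constant
  have hsub : (s - δ) ∈ TS := by
    obtain ⟨t, htT, hlt⟩ := exists_lt_of_lt_csSup ⟨r, hPr⟩ (show s - δ < s by linarith)
    simp only [hTS, Set.mem_setOf_eq] at htT ⊢
    intro q N
    obtain ⟨j, hm, hb, hl⟩ := htT q N
    refine ⟨j, hm, hb, fun α => le_trans ?_ (hl α)⟩
    exact mul_le_mul_of_nonneg_right hlt.le (Finset.sum_nonneg fun _ _ => norm_nonneg _)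
  -- s + δ is not: extract the witnesses of failure
  obtain ⟨q₀, m₀, hq⟩ : ∃ q₀ m₀ : ℕ, ∀ j : Fin m₀ → ℕ, StrictMono j → (∀ k, q₀ < j k) →
      ∃ α : Fin m₀ → 𝕜, ‖∑ k, α k • x (j k)‖ < (s + δ) * ∑ k, ‖α k‖ := by
    by_contra hcon
    push_neg at hcon
    have hmem : (s + δ) ∈ TS := by
      simp only [hTS, Set.mem_setOf_eq]
      exact hcon
    have := le_csSup hbdd hmem
    linarith
  have hm0 : 0 < m₀ := by
    rcases Nat.eq_zero_or_pos m₀ with h0 | h0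
    · exfalso
      subst h0
      obtain ⟨α, hα⟩ := hq (fun k => k.elim0) (fun a _ _ => a.elim0) (fun k => k.elim0)
      simp at hα
    · exact h0
  -- the big (s-δ)-copy beyond max p q₀
  obtain ⟨j, hjm, hjb, hjl⟩ := hsub (max p q₀) (n * m₀)
  have hjinj : Function.Injective j := hjm.injective
  -- chunks
  have hlt' : ∀ (l : Fin n) (k : Fin m₀), l.val * m₀ + k.val < n * m₀ := by
    intro l k
    calc l.val * m₀ + k.val < l.val * m₀ + m₀ := Nat.add_lt_add_left k.isLt _
    _ = (l.val + 1) * m₀ := (Nat.succ_mul _ _).symm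
    _ ≤ n * m₀ := Nat.mul_le_mul_right _ l.isLt
  set ι : Fin n → Fin m₀ → Fin (n * m₀) := fun l k => ⟨l.val * m₀ + k.val, hlt' l k⟩ with hι
  have hchunk : ∀ (l l' : Fin n) (k k' : Fin m₀), ι l k = ι l' k' → l = l' ∧ k = k' := by
    intro l l' k k' h
    have hval : l.val * m₀ + k.val = l'.val * m₀ + k'.val := congrArg Fin.val h
    have hdl : l.val = l'.val := by
      have e1 : (l.val * m₀ + k.val) / m₀ = l.val := aux_chunk_div hm0 k.isLt
      have e2 : (l'.val * m₀ + k'.val) / m₀ = l'.val := aux_chunk_div hm0 k'.isLt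
      rw [← e1, ← e2, hval]
    have hdk : k.val = k'.val := by
      rw [hdl] at hval
      exact Nat.add_left_cancel hval
    exact ⟨Fin.ext hdl, Fin.ext hdk⟩
  have hιmono : ∀ l : Fin n, StrictMono (fun k => j (ι l k)) := by
    intro l a b hab
    refine hjm ?_
    rw [Fin.lt_def] at hab
    simp only [hι, Fin.mk_lt_mk]
    exact Nat.add_lt_add_left hab _
  -- choose nearly-minimal-norm blocks in each chunk
  have hblockα : ∀ l : Fin n, ∃ α : Fin m₀ → 𝕜,
      ‖∑ k, α k • x (j (ι l k))‖ < (s + δ) * ∑ k, ‖α k‖ := by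
    intro l
    exact hq (fun k => j (ι l k)) (hιmono l)
      (fun k => lt_of_le_of_lt (le_max_right p q₀) (hjb _))
  choose α hα using hblockα
  set S : Fin n → ℝ := fun l => ∑ k, ‖α l k‖ with hSdef
  have hSnonneg : ∀ l, 0 ≤ S l := by
    intro l
    simp only [hSdef]
    exact Finset.sum_nonneg fun _ _ => norm_nonneg _
  have hSpos : ∀ l, 0 < S l := by
    intro l
    by_contra hcon
    push_neg at hcon
    have hS0 : S l = 0 := le_antisymm hcon (hSnonneg l)
    have h := hα l
    rw [show (∑ k, ‖α l k‖) = S l from rfl, hS0, mul_zero] at h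
    exact (norm_nonneg _).not_gt h
  set v : Fin n → X := fun l => ∑ k, α l k • x (j (ι l k)) with hvdef
  have hvup : ∀ l, ‖v l‖ < (s + δ) * S l := by
    intro l
    simp only [hvdef, hSdef]
    exact hα l
  have hιinj : ∀ l, Function.Injective (ι l) := fun l a b h => (hchunk l l a b h).2
  have hvlow : ∀ l, (s - δ) * S l ≤ ‖v l‖ := by
    intro l
    simp only [hvdef, hSdef]
    exact aux_restrict x j hjl (hιinj l) (α l)
  have hvpos : ∀ l, 0 < ‖v l‖ := by
    intro l
    refine lt_of_lt_of_le ?_ (hvlow l)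
    exact mul_pos hsδpos (hSpos l)
  -- the coefficient function γ
  set J : Fin n × Fin m₀ → ℕ := fun q => j (ι q.1 q.2) with hJ
  have hJinj : Function.Injective J := by
    intro a b h
    simp only [hJ] at h
    have h2 := hjinj h
    obtain ⟨h3, h4⟩ := hchunk _ _ _ _ h2
    exact Prod.ext h3 h4
  set c₀ : Fin n × Fin m₀ → 𝕜 := fun q => α q.1 q.2 / ((‖v q.1‖ : ℝ) : 𝕜) with hc₀
  set γ : ℕ → 𝕜 := Function.extend J c₀ 0 with hγ
  have hγval : ∀ (l : Fin n) (k : Fin m₀),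
      γ (j (ι l k)) = α l k / ((‖v l‖ : ℝ) : 𝕜) := by
    intro l k
    have h := hJinj.extend_apply c₀ 0 (l, k)
    simpa [hγ, hJ, hc₀] using h
  set A : Fin n → Finset ℕ := fun l => Finset.image (fun k => j (ι l k)) Finset.univ with hA
  have hnormC : ∀ l : Fin n, ‖((‖v l‖ : ℝ) : 𝕜)‖ = ‖v l‖ := by
    intro l
    rw [RCLike.norm_ofReal, abs_of_pos (hvpos l)]
  -- block identity
  have hAsum : ∀ l : Fin n, ∑ a ∈ A l, γ a • x a
      = ∑ k, (α l k / ((‖v l‖ : ℝ) : 𝕜)) • x (j (ι l k)) := by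
    intro l
    simp only [hA]
    rw [Finset.sum_image (fun a _ b _ h => hιinj l (hjinj h))]
    exact Finset.sum_congr rfl fun k _ => by rw [hγval]
  have hAsum' : ∀ l : Fin n, ∑ a ∈ A l, γ a • x a = ((‖v l‖ : ℝ) : 𝕜)⁻¹ • v l := by
    intro l
    rw [hAsum l]
    have hv : ((‖v l‖ : ℝ) : 𝕜)⁻¹ • v l
        = ∑ k, ((‖v l‖ : ℝ) : 𝕜)⁻¹ • (α l k • x (j (ι l k))) := by
      conv_lhs => rw [hvdef]
      simp only [Finset.smul_sum]
      rfl
    rw [hv]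
    refine Finset.sum_congr rfl fun k _ => ?_
    rw [smul_smul, div_eq_mul_inv, mul_comm]
  refine ⟨A, γ, ?_, ?_, ?_, ?_, ?_⟩
  · -- disjointness
    intro l l' hll'
    rw [Finset.disjoint_left]
    intro a ha ha'
    simp only [hA, Finset.mem_image, Finset.mem_univ, true_and] at ha ha'
    obtain ⟨k, hk⟩ := ha
    obtain ⟨k', hk'⟩ := ha'
    have := hjinj (hk.trans hk'.symm)
    exact hll' (hchunk _ _ _ _ this).1
  · -- beyond p
    intro l a ha
    simp only [hA, Finset.mem_image, Finset.mem_univ, true_and] at ha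
    obtain ⟨k, hk⟩ := ha
    rw [← hk]
    exact lt_of_le_of_lt (le_max_left p q₀) (hjb _)
  · -- norm one
    intro l
    rw [hAsum' l, norm_smul, norm_inv, hnormC l, inv_mul_cancel₀ (hvpos l).ne']
  · -- coefficient sum bound
    intro l
    have hsum : ∑ a ∈ A l, ‖γ a‖ = S l / ‖v l‖ := by
      simp only [hA]
      rw [Finset.sum_image (fun a _ b _ h => hιinj l (hjinj h))]
      simp only [hSdef]
      rw [Finset.sum_div]
      refine Finset.sum_congr rfl fun k _ => ?_
      rw [hγval, norm_div, hnormC l]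
    rw [hsum]
    have h1 : S l / ‖v l‖ ≤ 1 / (s - δ) := by
      rw [div_le_div_iff₀ (hvpos l) hsδpos]
      nlinarith [hvlow l]
    have h2 : (1 : ℝ) / (s - δ) < (1 + c1) / r := by
      rw [div_lt_div_iff₀ hsδpos hr]
      have hkey : r < (1 + c1) * (r - r * c1 / 2) := by nlinarith
      have hmono2 : (1 + c1) * (r - r * c1 / 2) ≤ (1 + c1) * (s - δ) := by
        have h5 : r - r * c1 / 2 ≤ s - δ := by rw [hδdef]; linarith
        exact mul_le_mul_of_nonneg_left h5 (by linarith)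
      linarith
    calc S l / ‖v l‖ ≤ 1 / (s - δ) := h1
    _ < (1 + c1) / r := h2
  · -- lower ℓ₁ estimate for the blocks
    intro β
    set D : Fin n × Fin m₀ → 𝕜 := fun q => β q.1 * (α q.1 q.2 / ((‖v q.1‖ : ℝ) : 𝕜)) with hD
    have hJinj' : Function.Injective (fun q : Fin n × Fin m₀ => ι q.1 q.2) := by
      intro a b h
      obtain ⟨h1, h2⟩ := hchunk _ _ _ _ h
      exact Prod.ext h1 h2
    have hlow5 : (s - δ) * ∑ q : Fin n × Fin m₀, ‖D q‖
        ≤ ‖∑ q : Fin n × Fin m₀, D q • x (j (ι q.1 q.2))‖ := by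
      simpa using aux_restrict x j hjl hJinj' D
    have hW : ∑ q : Fin n × Fin m₀, D q • x (j (ι q.1 q.2))
        = ∑ l, β l • ∑ a ∈ A l, γ a • x a := by
      rw [Fintype.sum_prod_type]
      refine Finset.sum_congr rfl fun l _ => ?_
      rw [hAsum l, Finset.smul_sum]
      refine Finset.sum_congr rfl fun k _ => ?_
      simp only [hD]
      exact (smul_smul _ _ _).symm
    have hDnorm : ∑ q : Fin n × Fin m₀, ‖D q‖ = ∑ l, ‖β l‖ * (S l / ‖v l‖) := by
      rw [Fintype.sum_prod_type]
      refine Finset.sum_congr rfl fun l _ => ?_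
      have hterm : ∀ k : Fin m₀, ‖D (l, k)‖ = ‖β l‖ * (‖α l k‖ / ‖v l‖) := by
        intro k
        simp only [hD]
        rw [norm_mul, norm_div, hnormC l]
      rw [Finset.sum_congr rfl (fun k _ => hterm k), ← Finset.mul_sum, ← Finset.sum_div]
    have hratio : ∀ l, 1 / (s + δ) ≤ S l / ‖v l‖ := by
      intro l
      rw [div_le_div_iff₀ hsδppos (hvpos l)]
      nlinarith [hvup l, hSpos l]
    have hβ0 : 0 ≤ ∑ l, ‖β l‖ := Finset.sum_nonneg fun _ _ => norm_nonneg _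
    have hterm2 : ∑ l, ‖β l‖ * (1 / (s + δ)) ≤ ∑ l, ‖β l‖ * (S l / ‖v l‖) :=
      Finset.sum_le_sum fun l _ => mul_le_mul_of_nonneg_left (hratio l) (norm_nonneg _)
    have he : ∑ l, ‖β l‖ * (1 / (s + δ)) = (∑ l, ‖β l‖) * (1 / (s + δ)) := by
      rw [← Finset.sum_mul]
    have hcs : (1 - c2) * (s + δ) ≤ s - δ := by
      have hprod : c1 * r ≤ c2 * s := mul_le_mul hc12 hrs hr.le hc2pos.le
      have hc2δ : 0 ≤ c2 * δ := mul_nonneg hc2pos.le hδpos.le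
      have h2δ : 2 * δ = r * c1 := by rw [hδdef]; ring
      nlinarith
    have hkey : (1 - c2) * (∑ l, ‖β l‖) ≤ (s - δ) * ((∑ l, ‖β l‖) * (1 / (s + δ))) := by
      rw [show (s - δ) * ((∑ l, ‖β l‖) * (1 / (s + δ))) = (s - δ) * (∑ l, ‖β l‖) / (s + δ)
        by ring, le_div_iff₀ hsδppos]
      nlinarith [mul_le_mul_of_nonneg_left hcs hβ0]
    calc (1 - c2) * ∑ l, ‖β l‖
        ≤ (s - δ) * ((∑ l, ‖β l‖) * (1 / (s + δ))) := hkey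
    _ ≤ (s - δ) * ∑ l, ‖β l‖ * (S l / ‖v l‖) := by
        rw [← he]
        exact mul_le_mul_of_nonneg_left hterm2 hsδpos.le
    _ = (s - δ) * ∑ q : Fin n × Fin m₀, ‖D q‖ := by rw [hDnorm]
    _ ≤ ‖∑ q : Fin n × Fin m₀, D q • x (j (ι q.1 q.2))‖ := hlow5
    _ = ‖∑ l, β l • ∑ a ∈ A l, γ a • x a‖ := by rw [hW]
end

section
/- Let X be a complex L-embedded Banach space, let F ⊆ X be a finite-dimensional subspace, and let (x_n)_{n∈ℕ} be a bounded sequence in X with x_n ≠ 0 for all n such that the normalized sequence (x_n/‖x_n‖) spans ℓ₁ almost isometrically. Let 𝒱 be a nonprincipal ultrafilter on ℕ and suppose lim_{𝒱} ‖x_n‖ > 0. Then for every η > 0 there is a set U ∈ 𝒱 such that ‖α x + β x_n‖ ≥ (1 - η)(|α| ‖x‖ + |β| ‖x_n‖) for all α, β ∈ ℂ, all n ∈ U, and all x ∈ F. -/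
/-!
Normalize `e n = ‖x n‖⁻¹ • x n` and let `v ∈ X**` be the weak* limit of `J (e n)` along `𝒱`;
write `v = J y + s` with `s ∈ X_s`. Since every tail of `(e n)` is an almost isometric
`ℓ₁`-basis, Hahn–Banach gives norm-one functionals with arbitrary prescribed phases on a tail,
and `v` is known on each of them. Comparing with `‖v - J y‖ = ‖s‖ ≤ 1 - ‖y‖` shows that `y` and
the tail `e m, e (m+1), …` are almost `ℓ₁`-orthogonal, so some norm-one functional is `≈ -‖y‖`
at `y` and `≈ 1` on the tail; evaluating `s` on it forces `‖y‖ ≤ δ m` for every `m`. Hence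
`v ∈ X_s` and `‖v‖ = 1`. If the inequality failed on a set in `𝒱`, normalized counterexamples
`(ξ n, β n)` in the finite-dimensional space `F × ℂ` would converge along `𝒱` to `(ξ, β)`, and
`J ξ + β v` would have norm at most `1 - η`, although the L-decomposition gives it norm
`‖ξ‖ + ‖β‖ = 1`.
-/

open NormedSpace Filter Topology Finsupp Complex ComplexConjugate

theorem norm_inv_norm_smul_le_one {E : Type*} [SeminormedAddCommGroup E] [NormedSpace ℝ E]
    (x : E) : ‖‖x‖⁻¹ • x‖ ≤ 1 := by
  rw [norm_smul, norm_inv, norm_norm]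
  exact inv_mul_le_one_of_le₀ le_rfl (norm_nonneg _)

theorem ofReal_norm_smul_inv_norm_smul {E : Type*} [NormedAddCommGroup E] [NormedSpace ℂ E]
    (x : E) : (‖x‖ : ℂ) • ‖x‖⁻¹ • x = x := by
  rcases eq_or_ne x 0 with rfl | hx
  · simp
  rw [← Complex.coe_smul, smul_smul, ← ofReal_mul, mul_inv_cancel₀ (norm_ne_zero_iff.mpr hx),
    ofReal_one, one_smul]

theorem Ultrafilter.le_atTop_of_forall_ne_pure {𝒱 : Ultrafilter ℕ}
    (h : ∀ n, (𝒱 : Filter ℕ) ≠ pure n) : (𝒱 : Filter ℕ) ≤ atTop :=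
  Nat.cofinite_eq_atTop ▸
    𝒱.le_cofinite_or_eq_pure.resolve_right fun ⟨n, hn⟩ => h n (by rw [hn]; rfl)

theorem Complex.mul_conj_exp_arg_mul_I (z : ℂ) : z * conj (cexp (arg z * I)) = ‖z‖ := by
  calc z * conj (cexp (arg z * I)) = ‖z‖ * (cexp (arg z * I) * conj (cexp (arg z * I))) := by
        rw [← mul_assoc, norm_mul_exp_arg_mul_I]
    _ = ‖z‖ := by rw [mul_conj', norm_exp_ofReal_mul_I]; simp

section Duality

variable {X : Type*} [NormedAddCommGroup X] [NormedSpace ℂ X] {ι : Type*}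

theorem exists_dual_apply_eq_of_norm_linearCombination_le (w : ι → X) (b : ι → ℂ)
    (h : ∀ l : ι →₀ ℂ, ‖linearCombination ℂ b l‖ ≤ ‖linearCombination ℂ w l‖) :
    ∃ f : StrongDual ℂ X, ‖f‖ ≤ 1 ∧ ∀ i, f (w i) = b i := by
  set W := linearCombination ℂ w
  set B := linearCombination ℂ b
  have hker : LinearMap.ker W ≤ LinearMap.ker B := fun l hl =>
    norm_le_zero_iff.mp (by simpa [LinearMap.mem_ker.mp hl] using h l)
  let g : LinearMap.range W →ₗ[ℂ] ℂ :=
    (LinearMap.ker W).liftQ B hker ∘ₗ W.quotKerEquivRange.symm.toLinearMap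
  have hg : ∀ l, g ⟨W l, LinearMap.mem_range_self W l⟩ = B l := fun l => by simp [g]
  have hg_le : ∀ z, ‖g z‖ ≤ 1 * ‖z‖ := by
    rintro ⟨_, l, rfl⟩
    rw [hg, one_mul]
    exact h l
  obtain ⟨f, hf, hf_norm⟩ := exists_extension_norm_eq _ (g.mkContinuous 1 hg_le)
  refine ⟨f, hf_norm ▸ LinearMap.mkContinuous_norm_le _ zero_le_one _, fun i => ?_⟩
  have hfi := hf ⟨W (single i 1), LinearMap.mem_range_self W _⟩
  rw [LinearMap.mkContinuous_apply, hg] at hfi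
  simpa [W, B] using hfi

theorem exists_dual_apply_eq_of_sum_norm_mul_le (w : ι → X) (a : ι → ℝ)
    (h : ∀ l : ι →₀ ℂ, (l.sum fun i c => ‖c‖ * a i) ≤ ‖linearCombination ℂ w l‖)
    (b : ι → ℂ) (hb : ∀ i, ‖b i‖ ≤ a i) :
    ∃ f : StrongDual ℂ X, ‖f‖ ≤ 1 ∧ ∀ i, f (w i) = b i := by
  refine exists_dual_apply_eq_of_norm_linearCombination_le w b fun l => ?_
  calc ‖linearCombination ℂ b l‖ ≤ l.sum fun i c => ‖c * b i‖ := by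
        rw [linearCombination_apply]; exact norm_sum_le _ _
    _ ≤ l.sum fun i c => ‖c‖ * a i :=
        Finset.sum_le_sum fun i _ => by dsimp only; rw [norm_mul]; gcongr; exact hb i
    _ ≤ ‖linearCombination ℂ w l‖ := h l

theorem sum_norm_mul_le_norm_linearCombination (w : ι → X) (a : ι → ℝ) (l : ι →₀ ℂ)
    (h : ∃ f : StrongDual ℂ X, ‖f‖ ≤ 1 ∧ ∀ i, ‖l i‖ * a i ≤ (l i * f (w i)).re) :
    (l.sum fun i c => ‖c‖ * a i) ≤ ‖linearCombination ℂ w l‖ := by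
  obtain ⟨f, hf, hfl⟩ := h
  calc (l.sum fun i c => ‖c‖ * a i) ≤ l.sum fun i c => (c * f (w i)).re :=
        Finset.sum_le_sum fun i _ => hfl i
    _ = (f (linearCombination ℂ w l)).re := by
        simp [linearCombination_apply, Finsupp.sum, Complex.re_sum]
    _ ≤ ‖f (linearCombination ℂ w l)‖ := re_le_norm _
    _ ≤ ‖linearCombination ℂ w l‖ := by simpa using f.le_of_opNorm_le hf (linearCombination ℂ w l)

theorem norm_le_of_tendsto_apply {l : Filter ι} [l.NeBot] {u : ι → X}
    {v : StrongDual ℂ (StrongDual ℂ X)}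
    (hv : ∀ f, Tendsto (fun i => f (u i)) l (𝓝 (v f))) {c : ℝ} (hc : ∀ᶠ i in l, ‖u i‖ ≤ c) :
    ‖v‖ ≤ c := by
  obtain ⟨i, hi⟩ := hc.exists
  refine ContinuousLinearMap.opNorm_le_bound _ ((norm_nonneg _).trans hi) fun f => ?_
  refine le_of_tendsto (hv f).norm (hc.mono fun i hi => ?_)
  calc ‖f (u i)‖ ≤ ‖f‖ * ‖u i‖ := f.le_opNorm _
    _ ≤ c * ‖f‖ := by rw [mul_comm]; gcongr

theorem exists_tendsto_apply_of_norm_le (l : Ultrafilter ι) {u : ι → X} {c : ℝ}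
    (hu : ∀ i, ‖u i‖ ≤ c) :
    ∃ v : StrongDual ℂ (StrongDual ℂ X), ∀ f, Tendsto (fun i => f (u i)) l (𝓝 (v f)) := by
  have hlim : ∀ f : StrongDual ℂ X, ∃ z, Tendsto (fun i => f (u i)) l (𝓝 z) := fun f => by
    obtain ⟨z, -, hz⟩ := (isCompact_closedBall (0 : ℂ) (‖f‖ * c)).ultrafilter_le_nhds'
      (l.map fun i => f (u i)) (Eventually.of_forall (f := (l : Filter ι)) fun i => by
        simpa using f.le_opNorm_of_le (hu i))
    exact ⟨z, hz⟩
  choose V hV using hlim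
  let V' : StrongDual ℂ X →ₗ[ℂ] ℂ :=
    { toFun := V
      map_add' := fun f g => tendsto_nhds_unique (hV (f + g)) (by simpa using (hV f).add (hV g))
      map_smul' := fun a f => tendsto_nhds_unique (hV (a • f)) (by simpa using (hV f).const_mul a) }
  refine ⟨V'.mkContinuous c fun f => le_of_tendsto (hV f).norm (.of_forall fun i => ?_), hV⟩
  rw [mul_comm]
  exact f.le_opNorm_of_le (hu i)

end Duality

section AlmostIsometricL1

variable {X : Type*} [NormedAddCommGroup X] [NormedSpace ℂ X]

theorem sum_norm_mul_le_norm_linearCombination_shift {u : ℕ → X} {δ : ℕ → ℝ}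
    (hu : ∀ m M : ℕ, m ≤ M → ∀ α : ℕ → ℂ,
      (1 - δ m) * ∑ j ∈ Finset.Icc m M, ‖α j‖ ≤ ‖∑ j ∈ Finset.Icc m M, α j • u j‖)
    (m : ℕ) (l : ℕ →₀ ℂ) :
    (l.sum fun _ c => ‖c‖ * (1 - δ m)) ≤ ‖linearCombination ℂ (fun k => u (m + k)) l‖ := by
  obtain ⟨N, hN⟩ := Finset.exists_nat_subset_range l.support
  have hl := hu m (m + N) (Nat.le_add_right m N) fun j => l (j - m)
  simp only [← Finset.Ico_add_one_right_eq_Icc, Finset.sum_Ico_eq_sum_range,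
    add_assoc, add_tsub_cancel_left] at hl
  have hsupp : l.support ⊆ Finset.range (N + 1) :=
    hN.trans (Finset.range_subset_range.mpr N.le_succ)
  rw [linearCombination_apply, sum_of_support_subset l hsupp _ (by simp),
    sum_of_support_subset l hsupp _ (by simp), ← Finset.sum_mul, mul_comm]
  exact hl

variable {e : ℕ → X} {l : Filter ℕ} {v : StrongDual ℂ (StrongDual ℂ X)}

theorem apply_eq_of_eventually_apply_add_eq [l.NeBot] (hl : l ≤ atTop)
    (hv : ∀ f, Tendsto (fun n => f (e n)) l (𝓝 (v f))) {f : StrongDual ℂ X} {c : ℂ} (m : ℕ)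
    (h : ∀ᶠ k in atTop, f (e (m + k)) = c) : v f = c := by
  refine tendsto_nhds_unique (hv f) (tendsto_const_nhds.congr' ?_)
  filter_upwards [hl ((tendsto_sub_atTop_nat m).eventually h), hl (eventually_ge_atTop m)]
    with n hn hmn
  rw [← hn, Nat.add_sub_cancel' hmn]

variable {δ : ℕ → ℝ}

theorem one_sub_le_norm_of_tendsto_apply
    (he : ∀ m (l : ℕ →₀ ℂ),
      (l.sum fun _ c => ‖c‖ * (1 - δ m)) ≤ ‖linearCombination ℂ (fun k => e (m + k)) l‖)
    [l.NeBot] (hl : l ≤ atTop) (hv : ∀ f, Tendsto (fun n => f (e n)) l (𝓝 (v f)))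
    {m : ℕ} (hδm : δ m ≤ 1) : 1 - δ m ≤ ‖v‖ := by
  have hnorm : ‖((1 - δ m : ℝ) : ℂ)‖ = 1 - δ m := by
    rw [Complex.norm_real, Real.norm_of_nonneg (sub_nonneg.mpr hδm)]
  obtain ⟨f, hf, hfe⟩ := exists_dual_apply_eq_of_sum_norm_mul_le _ _ (he m) _ fun _ => hnorm.le
  have hvf : v f = ((1 - δ m : ℝ) : ℂ) :=
    apply_eq_of_eventually_apply_add_eq hl hv m (.of_forall hfe)
  calc 1 - δ m = ‖v f‖ := by rw [hvf, hnorm]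
    _ ≤ ‖v‖ := (v.le_opNorm f).trans (mul_le_of_le_one_right (norm_nonneg _) hf)


/-- `fun o => o.elim y fun k => e (m + k)` is the family `y, e m, e (m + 1), …`. Each vector is
tested against a functional aligned with the phases of `c` on the tail and, eventually, with the
phase of `c none`; its value at `v` is then known, and `hy` transfers it to `y`. -/
theorem sum_norm_mul_le_norm_linearCombination_option
    (he : ∀ m (l : ℕ →₀ ℂ),
      (l.sum fun _ c => ‖c‖ * (1 - δ m)) ≤ ‖linearCombination ℂ (fun k => e (m + k)) l‖)
    [l.NeBot] (hl : l ≤ atTop) (hv : ∀ f, Tendsto (fun n => f (e n)) l (𝓝 (v f))) {y : X}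
    (hy : ∀ f : StrongDual ℂ X, ‖f‖ ≤ 1 → ‖v f - f y‖ ≤ 1 - ‖y‖) {m : ℕ} (hδm : δ m ≤ 1)
    (c : Option ℕ →₀ ℂ) :
    (c.sum fun o a => ‖a‖ * o.elim (‖y‖ - δ m) fun _ => 1 - δ m) ≤
      ‖linearCombination ℂ (fun o => o.elim y fun k => e (m + k)) c‖ := by
  refine sum_norm_mul_le_norm_linearCombination _ _ c ?_
  obtain ⟨ψ, hψ1, hψ⟩ : ∃ ψ : ℂ, ‖ψ‖ = 1 ∧ ‖c none‖ * ψ = c none :=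
    ⟨_, norm_exp_ofReal_mul_I _, norm_mul_exp_arg_mul_I _⟩
  let θ : ℕ → ℂ := fun k => if c (some k) = 0 then ψ else cexp (arg (c (some k)) * I)
  have hθ : ∀ k, ‖θ k‖ = 1 := fun k => by
    unfold θ; split_ifs
    exacts [hψ1, norm_exp_ofReal_mul_I _]
  obtain ⟨f, hf, hfe⟩ := exists_dual_apply_eq_of_sum_norm_mul_le _ _ (he m)
    (fun k => (1 - δ m : ℝ) * conj (θ k)) fun k => by
      rw [norm_mul, RCLike.norm_conj, hθ, mul_one, Complex.norm_real,
        Real.norm_of_nonneg (sub_nonneg.mpr hδm)]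
  have hvf : v f = (1 - δ m : ℝ) * conj ψ := by
    refine apply_eq_of_eventually_apply_add_eq hl hv m ?_
    rw [← Nat.cofinite_eq_atTop]
    filter_upwards [c.some.support.eventually_cofinite_notMem] with k hk
    rw [hfe]
    simp only [θ]
    rw [if_pos (by simpa using hk)]
  refine ⟨f, hf, ?_⟩
  rintro (_ | k)
  · have hre : ‖y‖ - δ m ≤ (ψ * f y).re := by
      have h1 : (ψ * v f).re = 1 - δ m := by
        rw [hvf, mul_left_comm, mul_conj', hψ1]; simp
      have h2 : (ψ * (v f - f y)).re ≤ 1 - ‖y‖ := (re_le_norm _).trans (by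
        rw [norm_mul, hψ1, one_mul]; exact hy f hf)
      rw [mul_sub, sub_re] at h2
      linarith
    calc ‖c none‖ * (‖y‖ - δ m) ≤ ‖c none‖ * (ψ * f y).re := by gcongr
      _ = (c none * f y).re := by
        rw [← re_ofReal_mul, ← mul_assoc, hψ]
  · by_cases hk : c (some k) = 0
    · simp [hk]
    · simp only [Option.elim, hfe, θ, if_neg hk]
      rw [mul_left_comm, mul_conj_exp_arg_mul_I, ← ofReal_mul, ofReal_re, mul_comm]

theorem norm_le_of_eq_inclusionInDoubleDual_add
    (he : ∀ m (l : ℕ →₀ ℂ),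
      (l.sum fun _ c => ‖c‖ * (1 - δ m)) ≤ ‖linearCombination ℂ (fun k => e (m + k)) l‖)
    [l.NeBot] (hl : l ≤ atTop) (hv : ∀ f, Tendsto (fun n => f (e n)) l (𝓝 (v f))) {y : X}
    {s : StrongDual ℂ (StrongDual ℂ X)} (hvys : v = inclusionInDoubleDual ℂ X y + s)
    (hys : ‖y‖ + ‖s‖ ≤ 1) {m : ℕ} (hδm : δ m ≤ 1) : ‖y‖ ≤ δ m := by
  have hy : ∀ f : StrongDual ℂ X, ‖f‖ ≤ 1 → ‖v f - f y‖ ≤ 1 - ‖y‖ := fun f hf => by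
    have hs : v f - f y = s f := by simp [hvys]
    rw [hs]
    exact ((s.le_opNorm f).trans (mul_le_of_le_one_right (norm_nonneg _) hf)).trans (by linarith)
  by_contra! hlt
  obtain ⟨h, hh, hhw⟩ := exists_dual_apply_eq_of_sum_norm_mul_le _ _
    (sum_norm_mul_le_norm_linearCombination_option he hl hv hy hδm)
    (fun o => o.elim (-(‖y‖ - δ m : ℝ)) fun _ => (1 - δ m : ℝ)) (by
      rintro (_ | k) <;> simp only [Option.elim, Complex.norm_real, norm_neg, Real.norm_eq_abs]
      · exact (abs_of_pos (sub_pos.mpr hlt)).le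
      · exact (abs_of_nonneg (sub_nonneg.mpr hδm)).le)
  have hvh : v h = (1 - δ m : ℝ) :=
    apply_eq_of_eventually_apply_add_eq hl hv m (.of_forall fun k => hhw (some k))
  have hgap : (1 - δ m) + (‖y‖ - δ m) ≤ 1 - ‖y‖ := by
    refine le_trans ?_ (hy h hh)
    have hhy : h y = -((‖y‖ - δ m : ℝ) : ℂ) := hhw none
    rw [hvh, hhy, sub_neg_eq_add, ← ofReal_add, norm_real]
    exact (le_of_eq (by ring)).trans (Real.le_norm_self _)
  linarith

end AlmostIsometricL1

section LOrthogonality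

variable {X : Type*} [NormedAddCommGroup X] [NormedSpace ℂ X]

-- `norm_smul` is unusable here: instance search fails on `NormSMulClass ℂ` for the bidual.
theorem norm_smul_bidual (c : ℂ) (v : StrongDual ℂ (StrongDual ℂ X)) : ‖c • v‖ = ‖c‖ * ‖v‖ := by
  refine le_antisymm (ContinuousLinearMap.opNorm_smul_le c v) ?_
  rcases eq_or_ne c 0 with rfl | hc
  · rw [norm_zero, zero_mul]
    exact ContinuousLinearMap.opNorm_nonneg _
  calc ‖c‖ * ‖v‖ = ‖c‖ * ‖c⁻¹ • c • v‖ := by rw [inv_smul_smul₀ hc]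
    _ ≤ ‖c‖ * (‖c⁻¹‖ * ‖c • v‖) := by gcongr; exact ContinuousLinearMap.opNorm_smul_le _ _
    _ = ‖c • v‖ := by
      rw [norm_inv, ← mul_assoc, mul_inv_cancel₀ (norm_ne_zero_iff.mpr hc), one_mul]

theorem mul_norm_add_norm_le_norm_add_smul {F : Subspace ℂ X} {z : X} {c : ℝ}
    (h : ∀ ξ ∈ F, ∀ β : ℂ, ‖ξ‖ + ‖β‖ = 1 → c ≤ ‖ξ + β • z‖) {ξ : X} (hξ : ξ ∈ F) (β : ℂ) :
    c * (‖ξ‖ + ‖β‖) ≤ ‖ξ + β • z‖ := by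
  rcases (add_nonneg (norm_nonneg ξ) (norm_nonneg β)).eq_or_lt with hT | hT
  · rw [← hT, mul_zero]
    exact norm_nonneg _
  set T := ‖ξ‖ + ‖β‖
  have hT' : ‖(T : ℂ)⁻¹‖ = T⁻¹ := by rw [norm_inv, norm_real, Real.norm_of_nonneg hT.le]
  have hscaled := h ((T : ℂ)⁻¹ • ξ) (F.smul_mem _ hξ) ((T : ℂ)⁻¹ * β) (by
    rw [norm_smul, norm_mul, hT', ← mul_add, inv_mul_cancel₀ hT.ne'])
  rw [mul_smul, ← smul_add, norm_smul, hT'] at hscaled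
  rwa [le_inv_mul_iff₀ hT, mul_comm] at hscaled

theorem eventually_le_norm_add_smul {ι : Type*}
    (Xs : Submodule ℂ (StrongDual ℂ (StrongDual ℂ X)))
    (hXs_norm : ∀ (x : X), ∀ s ∈ Xs, ‖inclusionInDoubleDual ℂ X x + s‖ = ‖x‖ + ‖s‖)
    (F : Subspace ℂ X) [FiniteDimensional ℂ F] (𝒱 : Ultrafilter ι) {e : ι → X}
    {v : StrongDual ℂ (StrongDual ℂ X)} (hv : ∀ f, Tendsto (fun n => f (e n)) 𝒱 (𝓝 (v f)))
    (hvXs : v ∈ Xs) (hv1 : ‖v‖ = 1) {η : ℝ} (hη : 0 < η) :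
    ∀ᶠ n in 𝒱, ∀ ξ ∈ F, ∀ β : ℂ, ‖ξ‖ + ‖β‖ = 1 → 1 - η ≤ ‖ξ + β • e n‖ := by
  set K : Set (F × ℂ) := {q | ‖q.1‖ + ‖q.2‖ = 1}
  by_contra hbad
  have hwitness : ∀ᶠ n in 𝒱, ∃ q : F × ℂ, q ∈ K ∧ ‖(q.1 : X) + q.2 • e n‖ < 1 - η := by
    refine (Ultrafilter.eventually_not.mpr hbad).mono fun n hn => ?_
    push Not at hn
    obtain ⟨ξ, hξ, β, hK, hlt⟩ := hn
    exact ⟨(⟨ξ, hξ⟩, β), hK, hlt⟩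
  obtain ⟨q, hq⟩ := hwitness.choice
  have hK : IsCompact K := Metric.isCompact_of_isClosed_isBounded
    (isClosed_eq (by fun_prop) continuous_const)
    ((Metric.isBounded_closedBall (x := 0) (r := 1)).subset fun q hq => by
      simp only [K, Set.mem_ofPred_eq] at hq
      simp only [Metric.mem_closedBall, dist_zero_right, Prod.norm_def]
      exact max_le (by linarith [norm_nonneg q.2]) (by linarith [norm_nonneg q.1]))
  obtain ⟨q₀, hq₀K, hq₀⟩ := hK.ultrafilter_le_nhds' (𝒱.map q) (hq.mono fun n hn => hn.1)
  have hlim : ‖inclusionInDoubleDual ℂ X q₀.1 + q₀.2 • v‖ ≤ 1 - η := by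
    refine norm_le_of_tendsto_apply (u := fun n => (q n).1 + (q n).2 • e n) (fun f => ?_)
      (hq.mono fun n hn => hn.2.le)
    have hq₀' : Tendsto q 𝒱 (𝓝 q₀) := hq₀
    simpa using (((f.continuous.comp continuous_subtype_val).tendsto q₀.1).comp
      hq₀'.fst_nhds).add (hq₀'.snd_nhds.mul (hv f))
  rw [hXs_norm _ _ (Xs.smul_mem _ hvXs), norm_smul_bidual, hv1, mul_one] at hlim
  have hq₀1 : ‖(q₀.1 : X)‖ + ‖q₀.2‖ = 1 := hq₀K
  linarith

end LOrthogonality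

theorem l_embedded_almost_l_orthogonality_general
    {X : Type*} [NormedAddCommGroup X] [NormedSpace ℂ X]
    (Xs : Submodule ℂ (StrongDual ℂ (StrongDual ℂ X)))
    (hXs_compl : IsCompl (LinearMap.range (inclusionInDoubleDual ℂ X : X →ₗ[ℂ] StrongDual ℂ (StrongDual ℂ X))) Xs)
    (hXs_norm : ∀ (x : X), ∀ s ∈ Xs, ‖inclusionInDoubleDual ℂ X x + s‖ = ‖x‖ + ‖s‖)
    (F : Subspace ℂ X) (hF : FiniteDimensional ℂ F)
    (x : ℕ → X)
    (δ : ℕ → ℝ) (hδ0 : Tendsto δ atTop (nhds 0))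
    (hl1 : ∀ m M : ℕ, m ≤ M → ∀ α : ℕ → ℂ,
      ‖∑ j ∈ Finset.Icc m M, α j • (‖x j‖⁻¹ • x j)‖ ≤ ∑ j ∈ Finset.Icc m M, ‖α j‖ ∧
      (1 - δ m) * ∑ j ∈ Finset.Icc m M, ‖α j‖
        ≤ ‖∑ j ∈ Finset.Icc m M, α j • (‖x j‖⁻¹ • x j)‖)
    (𝒱 : Ultrafilter ℕ) (h𝒱 : ∀ n : ℕ, (𝒱 : Filter ℕ) ≠ pure n) :
    ∀ η : ℝ, 0 < η → ∃ U ∈ 𝒱, ∀ α β : ℂ, ∀ n ∈ U, ∀ ξ ∈ F,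
      (1 - η) * (‖α‖ * ‖ξ‖ + ‖β‖ * ‖x n‖) ≤ ‖α • ξ + β • x n‖ := by
  intro η hη
  set e : ℕ → X := fun n => ‖x n‖⁻¹ • x n
  have he := sum_norm_mul_le_norm_linearCombination_shift (u := e) fun m M hmM α =>
    (hl1 m M hmM α).2
  have h𝒱 := Ultrafilter.le_atTop_of_forall_ne_pure h𝒱
  have he1 : ∀ n, ‖e n‖ ≤ 1 := fun n => norm_inv_norm_smul_le_one (x n)
  obtain ⟨v, hv⟩ := exists_tendsto_apply_of_norm_le 𝒱 he1
  have hv_le : ‖v‖ ≤ 1 := norm_le_of_tendsto_apply hv (.of_forall he1)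
  obtain ⟨_, s, ⟨y, rfl⟩, hs, hvys⟩ :=
    Submodule.codisjoint_iff_exists_add_eq.mp hXs_compl.codisjoint v
  replace hvys : inclusionInDoubleDual ℂ X y + s = v := hvys
  have hys : ‖y‖ + ‖s‖ ≤ 1 := by rw [← hXs_norm y s hs, hvys]; exact hv_le
  have hδ1 : ∀ᶠ m in atTop, δ m ≤ 1 := hδ0.eventually (ge_mem_nhds one_pos)
  have hy : y = 0 := norm_le_zero_iff.mp <| ge_of_tendsto hδ0 <| hδ1.mono fun m =>
    norm_le_of_eq_inclusionInDoubleDual_add he h𝒱 hv hvys.symm hys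
  have hvXs : v ∈ Xs := by rwa [← hvys, hy, map_zero, zero_add]
  have hv1 : ‖v‖ = 1 := le_antisymm hv_le <| by
    simpa using le_of_tendsto (tendsto_const_nhds.sub hδ0) <| hδ1.mono fun m =>
      one_sub_le_norm_of_tendsto_apply he h𝒱 hv
  refine ⟨_, eventually_le_norm_add_smul Xs hXs_norm F 𝒱 hv hvXs hv1 hη, fun α β n hn ξ hξ => ?_⟩
  have hxe : (β * ‖x n‖) • e n = β • x n := by rw [mul_smul, ofReal_norm_smul_inv_norm_smul]
  simpa [norm_smul, hxe, mul_assoc] using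
    mul_norm_add_norm_le_norm_add_smul hn (F.smul_mem α hξ) (β * ‖x n‖)

/-- Godefroy's claim.  Let `X` be a complex L-embedded Banach space,
i.e. `X** = J(X) ⊕ X_s` with `‖J x + s‖ = ‖x‖ + ‖s‖` for `x ∈ X`, `s ∈ X_s`.  Let
`F ⊆ X` be a finite-dimensional subspace and let `(x n)` be a bounded sequence of nonzero
vectors such that `(x n / ‖x n‖)` spans `ℓ₁` almost isometrically.  Let `𝒱` be a
nonprincipal ultrafilter on `ℕ` with `lim_𝒱 ‖x n‖ > 0`.  Then for every `η > 0` there is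
`U ∈ 𝒱` such that `‖α • x + β • x n‖ ≥ (1 - η)(|α| ‖x‖ + |β| ‖x n‖)` for all scalars
`α, β`, all `n ∈ U` and all `x ∈ F`. -/
theorem l_embedded_almost_l_orthogonality
    {X : Type*} [NormedAddCommGroup X] [NormedSpace ℂ X] [CompleteSpace X]
    (Xs : Submodule ℂ (StrongDual ℂ (StrongDual ℂ X)))
    (hXs_closed : IsClosed (Xs : Set (StrongDual ℂ (StrongDual ℂ X))))
    (hXs_compl : IsCompl (LinearMap.range (inclusionInDoubleDual ℂ X : X →ₗ[ℂ] StrongDual ℂ (StrongDual ℂ X))) Xs)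
    (hXs_norm : ∀ (x : X), ∀ s ∈ Xs, ‖inclusionInDoubleDual ℂ X x + s‖ = ‖x‖ + ‖s‖)
    (F : Subspace ℂ X) (hF : FiniteDimensional ℂ F)
    (x : ℕ → X) (C : ℝ) (hbdd : ∀ n, ‖x n‖ ≤ C) (hx : ∀ n, x n ≠ 0)
    (δ : ℕ → ℝ) (hδ : ∀ m, 0 ≤ δ m ∧ δ m < 1) (hδ0 : Tendsto δ atTop (nhds 0))
    (hl1 : ∀ m M : ℕ, m ≤ M → ∀ α : ℕ → ℂ,
      ‖∑ j ∈ Finset.Icc m M, α j • (‖x j‖⁻¹ • x j)‖ ≤ ∑ j ∈ Finset.Icc m M, ‖α j‖ ∧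
      (1 - δ m) * ∑ j ∈ Finset.Icc m M, ‖α j‖
        ≤ ‖∑ j ∈ Finset.Icc m M, α j • (‖x j‖⁻¹ • x j)‖)
    (𝒱 : Ultrafilter ℕ) (h𝒱 : ∀ n : ℕ, (𝒱 : Filter ℕ) ≠ pure n)
    (L : ℝ) (hL : 0 < L)
    (hlim : Tendsto (fun n => ‖x n‖) (𝒱 : Filter ℕ) (nhds L)) :
    ∀ η : ℝ, 0 < η → ∃ U ∈ 𝒱, ∀ α β : ℂ, ∀ n ∈ U, ∀ ξ ∈ F,
      (1 - η) * (‖α‖ * ‖ξ‖ + ‖β‖ * ‖x n‖) ≤ ‖α • ξ + β • x n‖ :=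
  l_embedded_almost_l_orthogonality_general Xs hXs_compl hXs_norm F hF x δ hδ0 hl1 𝒱 h𝒱
end
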